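/- arXiv:quant-ph/0108105 — 6 statements merged into one kernel-verified Lean document; each statement's English description precedes it below -/
import Mathlib

section
/- For every phase matrix c there exists a family of complex sequences F_k : ℕ → ℂ, k ∈ ℕ, such that Σ_{k=0}^∞ |F_k(n)|² = 1 for every n ∈ ℕ, and for all n, m ∈ ℕ the series Σ_{k=0}^∞ F_k(n)·conj(F_k(m)) converges absolutely with sum c(n,m). -/
open scoped ComplexConjugate ComplexOrder

noncomputable section

abbrev H : Type := lp (fun _ : ℕ => ℂ) 2

def e (n : ℕ) : H := lp.single 2 n (1 : ℂ)

def IsPosSemidef (c : ℕ × ℕ → ℂ) : Prop :=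
  ∀ f : ℕ →₀ ℂ, 0 ≤ ∑ n ∈ f.support, ∑ m ∈ f.support, conj (f n) * c (n, m) * f m

def IsPhaseMatrix (c : ℕ × ℕ → ℂ) : Prop :=
  (∀ n, c (n, n) = 1) ∧ IsPosSemidef c

namespace GNS1
variable (c : ℕ × ℕ → ℂ)

def B (f g : ℕ →₀ ℂ) : ℂ := ∑ n ∈ f.support, ∑ m ∈ g.support, conj (f n) * c (n, m) * g m

lemma B_eq (f g : ℕ →₀ ℂ) (s t : Finset ℕ) (hs : f.support ⊆ s) (ht : g.support ⊆ t) :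
    B c f g = ∑ n ∈ s, ∑ m ∈ t, conj (f n) * c (n, m) * g m := by
  unfold B
  rw [Finset.sum_subset hs (fun n _ hn => by
    simp [Finsupp.notMem_support_iff.mp hn])]
  refine Finset.sum_congr rfl fun n _ => ?_
  rw [Finset.sum_subset ht (fun m _ hm => by
    simp [Finsupp.notMem_support_iff.mp hm])]

lemma B_add_right (f g h : ℕ →₀ ℂ) : B c f (g + h) = B c f g + B c f h := by
  rw [B_eq c f (g + h) f.support (g.support ∪ h.support) le_rfl Finsupp.support_add,
      B_eq c f g f.support (g.support ∪ h.support) le_rfl Finset.subset_union_left,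
      B_eq c f h f.support (g.support ∪ h.support) le_rfl Finset.subset_union_right,
      ← Finset.sum_add_distrib]
  refine Finset.sum_congr rfl fun n _ => ?_
  rw [← Finset.sum_add_distrib]
  refine Finset.sum_congr rfl fun m _ => ?_
  simp [mul_add]

lemma B_add_left (f g h : ℕ →₀ ℂ) : B c (f + g) h = B c f h + B c g h := by
  rw [B_eq c (f + g) h (f.support ∪ g.support) h.support Finsupp.support_add le_rfl,
      B_eq c f h (f.support ∪ g.support) h.support Finset.subset_union_left le_rfl,
      B_eq c g h (f.support ∪ g.support) h.support Finset.subset_union_right le_rfl,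
      ← Finset.sum_add_distrib]
  refine Finset.sum_congr rfl fun n _ => ?_
  rw [← Finset.sum_add_distrib]
  refine Finset.sum_congr rfl fun m _ => ?_
  simp [add_mul]

lemma B_smul_right (a : ℂ) (f g : ℕ →₀ ℂ) : B c f (a • g) = a * B c f g := by
  rw [B_eq c f (a • g) f.support g.support le_rfl Finsupp.support_smul,
      B_eq c f g f.support g.support le_rfl le_rfl, Finset.mul_sum]
  refine Finset.sum_congr rfl fun n _ => ?_
  rw [Finset.mul_sum]
  refine Finset.sum_congr rfl fun m _ => ?_
  simp; ring

lemma B_smul_left (a : ℂ) (f g : ℕ →₀ ℂ) : B c (a • f) g = conj a * B c f g := by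
  rw [B_eq c (a • f) g f.support g.support Finsupp.support_smul le_rfl,
      B_eq c f g f.support g.support le_rfl le_rfl, Finset.mul_sum]
  refine Finset.sum_congr rfl fun n _ => ?_
  rw [Finset.mul_sum]
  refine Finset.sum_congr rfl fun m _ => ?_
  simp; ring

lemma B_zero_right (f : ℕ →₀ ℂ) : B c f 0 = 0 := by simp [B]

lemma B_sub_right (f g h : ℕ →₀ ℂ) : B c f (g - h) = B c f g - B c f h := by
  have := B_add_right c f (g - h) h
  simp at this
  linear_combination -this

lemma B_sum_right {ι : Type*} (f : ℕ →₀ ℂ) (s : Finset ι) (g : ι → (ℕ →₀ ℂ)) :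
    B c f (∑ i ∈ s, g i) = ∑ i ∈ s, B c f (g i) := by
  classical
  induction s using Finset.induction_on with
  | empty => simp [B_zero_right]
  | insert _ _ h ih => rw [Finset.sum_insert h, Finset.sum_insert h, B_add_right, ih]

lemma B_sum_left {ι : Type*} (f : ℕ →₀ ℂ) (s : Finset ι) (g : ι → (ℕ →₀ ℂ)) :
    B c (∑ i ∈ s, g i) f = ∑ i ∈ s, B c (g i) f := by
  classical
  induction s using Finset.induction_on with
  | empty => simp [B]
  | insert _ _ h ih => rw [Finset.sum_insert h, Finset.sum_insert h, B_add_left, ih]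

lemma B_single_single (n m : ℕ) : B c (Finsupp.single n 1) (Finsupp.single m 1) = c (n, m) := by
  rw [B_eq c _ _ {n} {m} Finsupp.support_single_subset Finsupp.support_single_subset]
  simp

variable (hc : IsPosSemidef c)
include hc

lemma B_self_nonneg (f : ℕ →₀ ℂ) : 0 ≤ B c f f := hc f

lemma B_self_im (f : ℕ →₀ ℂ) : (B c f f).im = 0 := (Complex.le_def.mp (hc f)).2.symm

lemma B_self_re (f : ℕ →₀ ℂ) : 0 ≤ (B c f f).re := by
  simpa only [Complex.zero_re, B] using (Complex.le_def.mp (hc f)).1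

lemma B_herm (f g : ℕ →₀ ℂ) : B c g f = conj (B c f g) := by
  have e1 : B c (f + g) (f + g) = B c f f + B c f g + B c g f + B c g g := by
    rw [B_add_left, B_add_right, B_add_right]; ring
  have e2 : B c (f + Complex.I • g) (f + Complex.I • g)
      = B c f f + Complex.I * B c f g - Complex.I * B c g f + B c g g := by
    simp only [B_add_left, B_add_right, B_smul_left, B_smul_right, Complex.conj_I]
    ring_nf
    linear_combination -(B c g g) * Complex.I_sq
  have h1 := B_self_im c hc (f + g)
  have h2 := B_self_im c hc (f + Complex.I • g)
  rw [e1] at h1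
  rw [e2] at h2
  have hf := B_self_im c hc f
  have hg := B_self_im c hc g
  simp [Complex.add_im, Complex.sub_im, Complex.mul_im, hf, hg] at h1 h2
  apply Complex.ext
  · simp only [Complex.conj_re]; linarith
  · have : (B c g f).im = -(B c f g).im := by linarith
    simpa [Complex.conj_im] using this

lemma B_null (f : ℕ →₀ ℂ) (h0 : B c f f = 0) (g : ℕ →₀ ℂ) : B c f g = 0 := by
  set z := B c f g with hz
  by_contra hne
  have hzpos : 0 < Complex.normSq z := by
    simpa [Complex.normSq_pos] using hne
  set s : ℝ := ((B c g g).re + 1) / (2 * Complex.normSq z) with hs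
  set t : ℂ := -(s : ℂ) * z with ht
  have e : B c (g + t • f) (g + t • f)
      = B c g g + t * B c g f + conj t * B c f g + conj t * t * B c f f := by
    rw [B_add_left, B_add_right, B_add_right, B_smul_left, B_smul_right,
        B_smul_left, B_smul_right]
    ring
  have hgf : B c g f = conj z := B_herm c hc f g
  have key : t * conj z + conj t * z = ((-2 * s * Complex.normSq z : ℝ) : ℂ) := by
    have hzz := Complex.mul_conj z
    rw [ht, map_mul, map_neg, Complex.conj_ofReal]
    push_cast
    linear_combination (-2 * (s:ℂ)) * hzz
  have e' : B c (g + t • f) (g + t • f) = B c g g + ((-2 * s * Complex.normSq z : ℝ) : ℂ) := by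
    rw [e, hgf, h0, ← key]; ring
  have hre := B_self_re c hc (g + t • f)
  rw [e'] at hre
  simp only [Complex.add_re, Complex.ofReal_re] at hre
  have hs2 : 2 * s * Complex.normSq z = (B c g g).re + 1 := by
    rw [hs]; field_simp
  linarith

def uvec : ℕ → (ℕ →₀ ℂ)
  | n => Finsupp.single n 1 - ∑ k ∈ (Finset.range n).attach,
      (B c (uvec k.1) (Finsupp.single n 1) / B c (uvec k.1) (uvec k.1)) • uvec k.1
  decreasing_by exact Finset.mem_range.mp k.2

omit hc in lemma uvec_def (n : ℕ) : uvec c n = Finsupp.single n 1 - ∑ k ∈ Finset.range n,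
    (B c (uvec c k) (Finsupp.single n 1) / B c (uvec c k) (uvec c k)) • uvec c k := by
  rw [uvec, ← Finset.sum_attach (Finset.range n)
    (fun k => (B c (uvec c k) (Finsupp.single n 1) / B c (uvec c k) (uvec c k)) • uvec c k)]

def coef (n k : ℕ) : ℂ :=
  if k = n then 1 else B c (uvec c k) (Finsupp.single n 1) / B c (uvec c k) (uvec c k)

omit hc in lemma delta_eq (n : ℕ) :
    Finsupp.single n 1 = ∑ k ∈ Finset.range (n + 1), coef c n k • uvec c k := by
  rw [Finset.sum_range_succ]
  have h1 : coef c n n = 1 := by simp [coef]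
  have h2 : ∀ k ∈ Finset.range n, coef c n k • uvec c k
      = (B c (uvec c k) (Finsupp.single n 1) / B c (uvec c k) (uvec c k)) • uvec c k := by
    intro k hk
    have : k ≠ n := Nat.ne_of_lt (Finset.mem_range.mp hk)
    simp [coef, this]
  rw [Finset.sum_congr rfl h2, h1, one_smul, uvec_def]
  abel

include hc in
lemma ortho : ∀ n j, j < n → B c (uvec c j) (uvec c n) = 0 := by
  intro n
  induction n using Nat.strong_induction_on with
  | _ n ih =>
    intro j hj
    have horth : ∀ k ∈ Finset.range n, k ≠ j → B c (uvec c j) (uvec c k) = 0 := by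
      intro k hk hkj
      rcases lt_or_gt_of_ne hkj.symm with h | h
      · exact ih k (Finset.mem_range.mp hk) j h
      · rw [B_herm c hc (uvec c k) (uvec c j), ih j hj k h, map_zero]
    rw [uvec_def c n, B_sub_right, B_sum_right]
    have : ∑ k ∈ Finset.range n,
        B c (uvec c j) ((B c (uvec c k) (Finsupp.single n 1) / B c (uvec c k) (uvec c k)) • uvec c k)
        = B c (uvec c j) (Finsupp.single n 1) := by
      rw [Finset.sum_eq_single j]
      · rw [B_smul_right]
        by_cases h0 : B c (uvec c j) (uvec c j) = 0
        · rw [h0, B_null c hc (uvec c j) h0 (Finsupp.single n 1)]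
          simp
        · rw [div_mul_cancel₀ _ h0]
      · intro k hk hkj
        rw [B_smul_right, horth k hk hkj, mul_zero]
      · intro h; exact absurd (Finset.mem_range.mpr hj) h
    rw [this, sub_self]

include hc in
lemma ortho' : ∀ j k, j ≠ k → B c (uvec c j) (uvec c k) = 0 := by
  intro j k hjk
  rcases lt_or_gt_of_ne hjk with h | h
  · exact ortho c hc k j h
  · rw [B_herm c hc (uvec c k) (uvec c j), ortho c hc j k h, map_zero]

include hc in
lemma B_u_delta (k n : ℕ) : B c (uvec c k) (Finsupp.single n 1)
    = if k ≤ n then coef c n k * B c (uvec c k) (uvec c k) else 0 := by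
  conv_lhs => rw [delta_eq c n]
  rw [B_sum_right]
  by_cases h : k ≤ n
  · rw [if_pos h, Finset.sum_eq_single k]
    · rw [B_smul_right]
    · intro j hj hjk
      rw [B_smul_right, ortho' c hc k j (Ne.symm hjk), mul_zero]
    · intro hk
      exact absurd (Finset.mem_range.mpr (Nat.lt_succ_of_le h)) hk
  · rw [if_neg h, Finset.sum_eq_zero]
    intro j hj
    have : j ≠ k := by
      have := Finset.mem_range.mp hj; omega
    rw [B_smul_right, ortho' c hc k j (Ne.symm this), mul_zero]

def Fseq (k n : ℕ) : ℂ :=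
  conj (B c (uvec c k) (Finsupp.single n 1)) / ((Real.sqrt ((B c (uvec c k) (uvec c k)).re) : ℝ) : ℂ)

include hc in
lemma B_self_eq_re (k : ℕ) :
    B c (uvec c k) (uvec c k) = (((B c (uvec c k) (uvec c k)).re : ℝ) : ℂ) :=
  Complex.ext rfl (by simp [B_self_im c hc])

include hc in
lemma Fseq_zero (k n : ℕ) (h : n < k) : Fseq c k n = 0 := by
  rw [Fseq, B_u_delta c hc k n, if_neg (by omega)]
  simp

include hc in
lemma key_term (n m j : ℕ) (hjn : j ≤ n) :
    conj (coef c n j) * B c (uvec c j) (Finsupp.single m 1)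
      = Fseq c j n * conj (Fseq c j m) := by
  set r : ℝ := (B c (uvec c j) (uvec c j)).re with hr
  have hrnn : 0 ≤ r := B_self_re c hc (uvec c j)
  have hBr : B c (uvec c j) (uvec c j) = (r : ℂ) := B_self_eq_re c hc j
  have hFn : Fseq c j n = conj (coef c n j) * (r : ℂ) / ((Real.sqrt r : ℝ) : ℂ) := by
    rw [Fseq, B_u_delta c hc j n, if_pos hjn, hBr, map_mul, Complex.conj_ofReal]
    norm_num
  by_cases hjm : j ≤ m
  · have hFm : Fseq c j m = conj (coef c m j) * (r : ℂ) / ((Real.sqrt r : ℝ) : ℂ) := by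
      rw [Fseq, B_u_delta c hc j m, if_pos hjm, hBr, map_mul, Complex.conj_ofReal]
      norm_num
    rw [B_u_delta c hc j m, if_pos hjm, hFn, hFm, hBr]
    rw [map_div₀, map_mul, Complex.conj_conj, Complex.conj_ofReal, Complex.conj_ofReal]
    rcases eq_or_lt_of_le hrnn with h0 | hpos
    · simp [← h0]
    · have hs : ((Real.sqrt r : ℝ) : ℂ) * ((Real.sqrt r : ℝ) : ℂ) = (r : ℂ) := by
        rw [← Complex.ofReal_mul, Real.mul_self_sqrt hrnn]
      have hsne : ((Real.sqrt r : ℝ) : ℂ) ≠ 0 := by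
        simp [Real.sqrt_eq_zero', hpos, not_le, Complex.ofReal_eq_zero]
      field_simp
      linear_combination (conj (coef c n j) * coef c m j) * hs
  · rw [B_u_delta c hc j m, if_neg hjm, Fseq_zero c hc j m (by omega), map_zero, mul_zero, mul_zero]

include hc in
lemma key (n m : ℕ) :
    c (n, m) = ∑ k ∈ Finset.range (n + 1), Fseq c k n * conj (Fseq c k m) := by
  have : c (n, m) = B c (Finsupp.single n 1) (Finsupp.single m 1) := (B_single_single c n m).symm
  rw [this]
  conv_lhs => rw [delta_eq c n]
  rw [B_sum_left]
  refine Finset.sum_congr rfl fun j hj => ?_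
  rw [B_smul_left, key_term c hc n m j (Nat.lt_succ_iff.mp (Finset.mem_range.mp hj))]

end GNS1

theorem stmt1 (c : ℕ × ℕ → ℂ) (hc : IsPhaseMatrix c) :
    ∃ F : ℕ → ℕ → ℂ,
      (∀ n, HasSum (fun k => ‖F k n‖ ^ 2) 1) ∧
      (∀ n m, Summable (fun k => ‖F k n * conj (F k m)‖) ∧
        HasSum (fun k => F k n * conj (F k m)) (c (n, m))) := by
  obtain ⟨hdiag, hpos⟩ := hc
  refine ⟨GNS1.Fseq c, ?_, ?_⟩
  · intro n
    have hz : ∀ k ∉ Finset.range (n + 1), ‖GNS1.Fseq c k n‖ ^ 2 = 0 := by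
      intro k hk
      rw [GNS1.Fseq_zero c hpos k n (by simpa using hk)]
      simp
    have hsum : HasSum (fun k => ‖GNS1.Fseq c k n‖ ^ 2) (∑ k ∈ Finset.range (n + 1), ‖GNS1.Fseq c k n‖ ^ 2) := hasSum_sum_of_ne_finset_zero hz
    have hval : ∑ k ∈ Finset.range (n + 1), ‖GNS1.Fseq c k n‖ ^ 2 = 1 := by
      have h1 := GNS1.key c hpos n n
      rw [hdiag n] at h1
      have h2 : ∀ k, GNS1.Fseq c k n * conj (GNS1.Fseq c k n) = ((‖GNS1.Fseq c k n‖ ^ 2 : ℝ) : ℂ) := by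
        intro k
        simp [Complex.mul_conj, Complex.normSq_eq_norm_sq]
      rw [Finset.sum_congr rfl (fun k _ => h2 k)] at h1
      rw [← Complex.ofReal_sum] at h1
      exact_mod_cast h1.symm
    rwa [hval] at hsum
  · intro n m
    have hz : ∀ k ∉ Finset.range (n + 1), GNS1.Fseq c k n * conj (GNS1.Fseq c k m) = 0 := by
      intro k hk
      rw [GNS1.Fseq_zero c hpos k n (by simpa using hk), zero_mul]
    constructor
    · apply summable_of_ne_finset_zero (s := Finset.range (n + 1))
      intro k hk
      rw [hz k hk, norm_zero]
    · have : HasSum (fun k => GNS1.Fseq c k n * conj (GNS1.Fseq c k m)) (∑ k ∈ Finset.range (n + 1), GNS1.Fseq c k n * conj (GNS1.Fseq c k m)) := hasSum_sum_of_ne_finset_zero hz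
      rwa [← GNS1.key c hpos n m] at this
end
end

section
/- Let c be a phase matrix and let F_k : ℕ → ℂ, k ∈ ℕ, satisfy Σ_{k=0}^∞ |F_k(n)|² = 1 for all n and c(n,m) = Σ_{k=0}^∞ F_k(n)·conj(F_k(m)) for all n, m. Fix a Borel set X ⊆ [0,2π). For each k there is a unique bounded operator E_{F_k}(X) on ℓ²(ℕ,ℂ) with ⟨e_n, E_{F_k}(X) e_m⟩ = F_k(n)·conj(F_k(m))·i_{n−m}(X), each E_{F_k}(X) is positive, and for all φ, ψ ∈ ℓ²(ℕ,ℂ) the series Σ_{k=0}^∞ ⟨φ, E_{F_k}(X) ψ⟩ converges with sum ⟨φ, E_c(X) ψ⟩, where E_c(X) is the unique bounded operator with ⟨e_n, E_c(X) e_m⟩ = c(n,m)·i_{n−m}(X). -/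
open scoped ComplexConjugate ComplexOrder
open MeasureTheory

noncomputable section

/-- `i_k(X) = (2π)⁻¹ ∫_X e^{ikθ} dθ`. -/
def ik (k : ℤ) (X : Set ℝ) : ℂ :=
  (2 * Real.pi)⁻¹ * ∫ θ in X, Complex.exp (Complex.I * k * θ)

/-- `r mod 2π`. -/
def rmod (r : ℝ) : ℝ := r - 2 * Real.pi * ⌊r / (2 * Real.pi)⌋

/-- `X ⊕ θ = {x ∈ [0,2π) | (x − θ) mod 2π ∈ X}`. -/
def shift (X : Set ℝ) (θ : ℝ) : Set ℝ :=
  {x | x ∈ Set.Ico 0 (2 * Real.pi) ∧ rmod (x - θ) ∈ X}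

/- ### Auxiliary material -/

open scoped ENNReal
open Set AddCircle

namespace Stmt5Aux

/- #### Generic lp lemmas -/

lemma inner_e_left (n : ℕ) (x : H) : @inner ℂ H _ (e n) x = x n := by
  rw [e, lp.inner_single_left]
  simp [RCLike.inner_apply]

lemma ext_of_inner_e {x y : H} (h : ∀ n, @inner ℂ H _ (e n) x = @inner ℂ H _ (e n) y) : x = y := by
  apply lp.ext; funext n
  have := h n; rwa [inner_e_left, inner_e_left] at this

lemma single_eq_smul_e (n : ℕ) (a : ℂ) : lp.single 2 n a = a • e n := by
  apply lp.ext; funext m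
  rw [lp.coeFn_smul]
  simp only [e, Pi.smul_apply, lp.single_apply]
  simp only [Pi.single_apply]; split_ifs <;> simp

lemma op_ext {T S : H →L[ℂ] H} (h : ∀ m, T (e m) = S (e m)) : T = S := by
  ext1 φ
  have h1 : HasSum (fun i => T (lp.single 2 i (φ i))) (T φ) :=
    (lp.hasSum_single ENNReal.ofNat_ne_top φ).mapL T
  have h2 : HasSum (fun i => S (lp.single 2 i (φ i))) (S φ) :=
    (lp.hasSum_single ENNReal.ofNat_ne_top φ).mapL S
  have heq : (fun i => T (lp.single 2 i (φ i))) = fun i => S (lp.single 2 i (φ i)) := by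
    funext i; rw [single_eq_smul_e, T.map_smul, S.map_smul, h]
  exact h1.unique (heq ▸ h2)

lemma op_unique (a : ℕ → ℕ → ℂ) {T S : H →L[ℂ] H}
    (hT : ∀ n m, @inner ℂ H _ (e n) (T (e m)) = a n m)
    (hS : ∀ n m, @inner ℂ H _ (e n) (S (e m)) = a n m) : T = S :=
  op_ext fun m => ext_of_inner_e fun n => by rw [hT, hS]

/- #### lp 2 norms via ℕ-pow -/

section lpsq
variable {ι : Type*} {G : ι → Type*} [∀ i, NormedAddCommGroup (G i)]

lemma two_toReal : (2 : ℝ≥0∞).toReal = ((2:ℕ) : ℝ) := by norm_num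

lemma lp_hasSum_norm_sq (f : lp G 2) : HasSum (fun i => ‖f i‖ ^ (2:ℕ)) (‖f‖ ^ (2:ℕ)) := by
  have h := lp.hasSum_norm (p := 2) (by norm_num) f
  simpa [two_toReal, Real.rpow_natCast] using h

lemma lp_norm_sq (f : lp G 2) : ‖f‖ ^ (2:ℕ) = ∑' i, ‖f i‖ ^ (2:ℕ) :=
  (lp_hasSum_norm_sq f).tsum_eq.symm

lemma lp_summable_sq (f : lp G 2) : Summable fun i => ‖f i‖ ^ (2:ℕ) :=
  (lp_hasSum_norm_sq f).summable

lemma lp_memℓp_of_sq {f : ∀ i, G i} (h : Summable fun i => ‖f i‖ ^ (2:ℕ)) : Memℓp f 2 := by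
  apply memℓp_gen
  simpa [two_toReal, Real.rpow_natCast] using h

lemma lp_norm_le_of_sq {f : lp G 2} {C : ℝ} (hC : 0 ≤ C)
    (h : ∑' i, ‖f i‖ ^ (2:ℕ) ≤ C ^ (2:ℕ)) : ‖f‖ ≤ C := by
  apply lp.norm_le_of_tsum_le (p := 2) (by norm_num) hC
  simpa [two_toReal, Real.rpow_natCast] using h

end lpsq

/- #### Componentwise operators on lp 2 -/

section lpcomp
variable {ι : Type*} {E F : ι → Type*}
  [∀ i, NormedAddCommGroup (E i)] [∀ i, NormedSpace ℂ (E i)]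
  [∀ i, NormedAddCommGroup (F i)] [∀ i, NormedSpace ℂ (F i)]

lemma memℓp_comp (T : ∀ i, E i →L[ℂ] F i) (hT : ∀ i x, ‖T i x‖ ≤ ‖x‖) (f : lp E 2) :
    Memℓp (fun i => T i (f i)) 2 := by
  apply lp_memℓp_of_sq
  refine Summable.of_nonneg_of_le (fun i => by positivity) (fun i => ?_) (lp_summable_sq f)
  exact pow_le_pow_left₀ (norm_nonneg _) (hT i _) 2

def lpComp (T : ∀ i, E i →L[ℂ] F i) (hT : ∀ i x, ‖T i x‖ ≤ ‖x‖) : lp E 2 →L[ℂ] lp F 2 :=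
  LinearMap.mkContinuous
    { toFun := fun f => ⟨fun i => T i (f i), memℓp_comp T hT f⟩
      map_add' := fun f g => by
        apply lp.ext; funext i
        simp only [lp.coeFn_add, Pi.add_apply]
        exact (T i).map_add _ _
      map_smul' := fun c f => by
        apply lp.ext; funext i
        simp only [lp.coeFn_smul, Pi.smul_apply, RingHom.id_apply]
        exact (T i).map_smul _ _ }
    1 (fun f => by
      rw [one_mul]
      refine lp_norm_le_of_sq (norm_nonneg f) ?_
      rw [lp_norm_sq f]
      refine Summable.tsum_le_tsum (fun i => pow_le_pow_left₀ (norm_nonneg _) (hT i _) 2)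
        (Summable.of_nonneg_of_le (fun i => by positivity)
          (fun i => pow_le_pow_left₀ (norm_nonneg _) (hT i _) 2) (lp_summable_sq f))
        (lp_summable_sq f))

@[simp] lemma lpComp_apply (T : ∀ i, E i →L[ℂ] F i) (hT : ∀ i x, ‖T i x‖ ≤ ‖x‖)
    (f : lp E 2) (i : ι) : (lpComp T hT f) i = T i (f i) := rfl

end lpcomp

/- #### Multiplication by an indicator function on L² -/

section mulInd
variable {α : Type*} [MeasurableSpace α] {μ : Measure α} {s : Set α}

lemma memLp_ind (hs : MeasurableSet s) (f : Lp ℂ 2 μ) : MemLp (s.indicator ⇑f) 2 μ :=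
  (Lp.memLp f).indicator hs

def mulInd (hs : MeasurableSet s) : Lp ℂ 2 μ →L[ℂ] Lp ℂ 2 μ :=
  LinearMap.mkContinuous
    { toFun := fun f => (memLp_ind hs f).toLp (s.indicator ⇑f)
      map_add' := fun f g => by
        have h1 : (memLp_ind hs (f + g)).toLp (s.indicator ⇑(f + g)) =
            ((memLp_ind hs f).add (memLp_ind hs g)).toLp (s.indicator ⇑f + s.indicator ⇑g) := by
          apply MemLp.toLp_congr
          filter_upwards [Lp.coeFn_add f g] with x hx
          by_cases h : x ∈ s
          · rw [Set.indicator_of_mem h, Pi.add_apply, Set.indicator_of_mem h,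
              Set.indicator_of_mem h, hx]
            rfl
          · rw [Set.indicator_of_notMem h, Pi.add_apply, Set.indicator_of_notMem h,
              Set.indicator_of_notMem h, add_zero]
        exact h1.trans (MemLp.toLp_add _ _)
      map_smul' := fun c f => by
        simp only [RingHom.id_apply]
        have h1 : (memLp_ind hs (c • f)).toLp (s.indicator ⇑(c • f)) =
            ((memLp_ind hs f).const_smul c).toLp (c • s.indicator ⇑f) := by
          apply MemLp.toLp_congr
          filter_upwards [Lp.coeFn_smul c f] with x hx
          by_cases h : x ∈ s
          · rw [Set.indicator_of_mem h, Pi.smul_apply, Set.indicator_of_mem h, hx]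
            rfl
          · rw [Set.indicator_of_notMem h, Pi.smul_apply, Set.indicator_of_notMem h, smul_zero]
        exact h1.trans (MemLp.toLp_const_smul _ _) }
    1 (fun f => by
      rw [one_mul]
      simp only [LinearMap.coe_mk, AddHom.coe_mk]
      rw [Lp.norm_toLp _ (memLp_ind hs f), Lp.norm_def]
      exact ENNReal.toReal_mono (Lp.eLpNorm_ne_top f) (eLpNorm_indicator_le _))

lemma mulInd_coeFn (hs : MeasurableSet s) (f : Lp ℂ 2 μ) : mulInd hs f =ᵐ[μ] s.indicator ⇑f :=
  MemLp.coeFn_toLp (memLp_ind hs f)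

lemma mulInd_norm_le (hs : MeasurableSet s) (f : Lp ℂ 2 μ) : ‖mulInd hs f‖ ≤ ‖f‖ := by
  simpa using (mulInd hs).le_of_opNorm_le (LinearMap.mkContinuous_norm_le _ zero_le_one _) f

lemma inner_mulInd (hs : MeasurableSet s) (f g : Lp ℂ 2 μ) :
    @inner ℂ _ _ f (mulInd hs g) = ∫ x in s, conj (f x) * g x ∂μ := by
  rw [MeasureTheory.L2.inner_def, ← integral_indicator hs]
  apply integral_congr_ae
  filter_upwards [mulInd_coeFn hs g] with x hx
  rw [RCLike.inner_apply, hx]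
  by_cases h : x ∈ s <;> simp [Set.indicator_apply, h] <;> ring

lemma mulInd_symm (hs : MeasurableSet s) (f g : Lp ℂ 2 μ) :
    @inner ℂ _ _ (mulInd hs f) g = @inner ℂ _ _ f (mulInd hs g) := by
  rw [← inner_conj_symm, inner_mulInd, inner_mulInd, ← integral_conj]
  apply integral_congr_ae
  filter_upwards with x
  simp only [map_mul, Complex.conj_conj]
  ring

lemma mulInd_isPositive (hs : MeasurableSet s) : (mulInd hs (μ := μ)).IsPositive := by
  constructor
  · intro f g
    exact mulInd_symm hs f g
  · intro f
    rw [ContinuousLinearMap.reApplyInnerSelf_apply, inner_re_symm, inner_mulInd]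
    have h2 : (∫ x in s, conj (f x) * f x ∂μ) = ∫ x in s, ((‖f x‖ ^ 2 : ℝ) : ℂ) ∂μ := by
      apply integral_congr_ae
      filter_upwards with x
      rw [RCLike.conj_mul]
      norm_cast
    have h3 : ∫ x in s, ((‖f x‖ ^ 2 : ℝ) : ℂ) ∂μ = ((∫ x in s, ‖f x‖ ^ 2 ∂μ : ℝ) : ℂ) :=
      integral_ofReal
    rw [h2, h3]
    have h4 : (0:ℝ) ≤ ∫ x in s, ‖f x‖ ^ 2 ∂μ := integral_nonneg (fun x => by positivity)
    simpa using h4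

end mulInd

/- #### The additive circle of circumference 2π -/

instance fact2pi : Fact (0 < 2 * Real.pi) := ⟨by positivity⟩

abbrev L2C : Type := Lp ℂ 2 (@haarAddCircle (2 * Real.pi) _)

def Xc (X : Set ℝ) : Set (AddCircle (2 * Real.pi)) := liftIoc (2 * Real.pi) 0 id ⁻¹' X

lemma measurable_liftIoc_id : Measurable (liftIoc (2 * Real.pi) 0 (id : ℝ → ℝ)) :=
  measurable_subtype_coe.comp (measurableEquivIoc (2 * Real.pi) 0).measurable

lemma Xc_measurable {X : Set ℝ} (hX : MeasurableSet X) : MeasurableSet (Xc X) :=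
  measurable_liftIoc_id hX

lemma mem_Xc_iff {X : Set ℝ} {θ : ℝ} (hθ : θ ∈ Ioc 0 (2 * Real.pi)) :
    (↑θ : AddCircle (2 * Real.pi)) ∈ Xc X ↔ θ ∈ X := by
  have h : θ ∈ Ioc 0 (0 + 2 * Real.pi) := by rwa [zero_add]
  simp only [Xc, Set.mem_preimage, liftIoc_coe_apply h, id]

lemma setIntegral_Xc (X : Set ℝ) (hXm : MeasurableSet X) (hXs : X ⊆ Ico 0 (2 * Real.pi)) (k : ℤ) :
    ∫ z in Xc X, fourier k z ∂(@haarAddCircle (2 * Real.pi) _) = ik k X := by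
  have h2π : (0:ℝ) < 2 * Real.pi := fact2pi.out
  have hvol : (∫ z in Xc X, fourier k z ∂(volume : Measure (AddCircle (2 * Real.pi))))
      = (2 * Real.pi) • ∫ z in Xc X, fourier k z ∂(@haarAddCircle (2 * Real.pi) _) := by
    rw [volume_eq_smul_haarAddCircle, Measure.restrict_smul, integral_smul_measure,
      ENNReal.toReal_ofReal h2π.le]
  have hIoc : (∫ z in Xc X, fourier k z ∂(volume : Measure (AddCircle (2 * Real.pi))))
      = ∫ θ in X, Complex.exp (Complex.I * k * θ) := by
    rw [← integral_indicator (Xc_measurable hXm),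
      ← AddCircle.integral_preimage (2 * Real.pi) 0 ((Xc X).indicator fun z => fourier k z),
      zero_add]
    have heq : EqOn (fun θ : ℝ => (Xc X).indicator (fun z => fourier k z) ↑θ)
        ((X ∩ Ioc 0 (2 * Real.pi)).indicator fun θ => Complex.exp (Complex.I * k * θ))
        (Ioc 0 (2 * Real.pi)) := by
      intro θ hθ
      dsimp only
      by_cases hX : θ ∈ X
      · rw [Set.indicator_of_mem ((mem_Xc_iff hθ).2 hX),
          Set.indicator_of_mem (Set.mem_inter hX hθ)]
        rw [fourier_coe_apply]
        congr 1
        have hπ : (Real.pi : ℂ) ≠ 0 := Complex.ofReal_ne_zero.2 Real.pi_ne_zero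
        push_cast
        field_simp
      · rw [Set.indicator_of_notMem (fun h => hX ((mem_Xc_iff hθ).1 h)),
          Set.indicator_of_notMem (fun h => hX h.1)]
    rw [setIntegral_congr_fun measurableSet_Ioc heq,
      setIntegral_indicator (hXm.inter measurableSet_Ioc),
      Set.inter_eq_self_of_subset_right Set.inter_subset_right]
    apply setIntegral_congr_set
    rw [MeasureTheory.ae_eq_set]
    refine ⟨measure_mono_null (fun x hx => (hx.2 hx.1.1).elim) measure_empty, ?_⟩
    refine measure_mono_null (t := ({0} : Set ℝ)) (fun x hx => ?_) (measure_singleton 0)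
    have h1 := hXs hx.1
    have h2 : x ∉ Ioc 0 (2 * Real.pi) := fun h => hx.2 ⟨hx.1, h⟩
    simp only [Set.mem_Ioc, not_and_or, not_lt, not_le] at h2
    rcases h2 with h2 | h2
    · simp [le_antisymm h2 h1.1]
    · exact absurd h1.2 (not_lt.2 h2.le)
  have key : (2 * Real.pi) • (∫ z in Xc X, fourier k z ∂(@haarAddCircle (2 * Real.pi) _))
      = ∫ θ in X, Complex.exp (Complex.I * k * θ) := by rw [← hvol, hIoc]
  rw [ik, ← key, Complex.real_smul, ← mul_assoc]
  have hπ : (Real.pi : ℂ) ≠ 0 := Complex.ofReal_ne_zero.2 Real.pi_ne_zero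
  have h1 : (↑((2 * Real.pi)⁻¹ : ℝ) : ℂ) * (↑((2 * Real.pi) : ℝ) : ℂ) = 1 := by
    push_cast
    field_simp
  rw [h1, one_mul]

/- #### The isometry from H to L² of the circle -/

def v (n : ℕ) : L2C := fourierLp 2 (-(n : ℤ))

lemma onv : Orthonormal ℂ v :=
  orthonormal_fourier.comp (fun n : ℕ => -(n : ℤ)) (fun a b h => by
    simpa using neg_injective h)

def Viso : H →ₗᵢ[ℂ] L2C := onv.orthogonalFamily.linearIsometry

lemma Viso_e (n : ℕ) : Viso (e n) = v n := by
  have h := onv.orthogonalFamily.linearIsometry_apply_single (i := n) (1 : ℂ)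
  rw [LinearIsometry.toSpanSingleton_apply] at h
  simpa [e, Viso, one_smul] using h

lemma conj_fourier_mul (n m : ℕ) (x : AddCircle (2 * Real.pi)) :
    conj (fourier (-(n : ℤ)) x) * fourier (-(m : ℤ)) x = fourier ((n : ℤ) - m) x := by
  have h1 : conj (fourier (-(n:ℤ)) x) = fourier (n:ℤ) x := by
    rw [fourier_neg, Complex.conj_conj]
  rw [h1, ← fourier_add, sub_eq_add_neg]

lemma inner_v_M (X : Set ℝ) (hXm : MeasurableSet X) (hXs : X ⊆ Ico 0 (2 * Real.pi)) (n m : ℕ) :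
    @inner ℂ L2C _ (v n) (mulInd (Xc_measurable hXm) (v m)) = ik ((n:ℤ) - m) X := by
  rw [inner_mulInd]
  have h1 : (∫ x in Xc X, conj ((v n) x) * (v m) x ∂(@haarAddCircle (2 * Real.pi) _))
      = ∫ x in Xc X, fourier ((n:ℤ) - m) x ∂(@haarAddCircle (2 * Real.pi) _) := by
    apply integral_congr_ae
    filter_upwards [ae_restrict_of_ae (coeFn_fourierLp 2 (-(n:ℤ))),
      ae_restrict_of_ae (coeFn_fourierLp 2 (-(m:ℤ)))] with x hx1 hx2
    have hx1' : (v n) x = fourier (-(n:ℤ)) x := hx1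
    have hx2' : (v m) x = fourier (-(m:ℤ)) x := hx2
    rw [hx1', hx2', conj_fourier_mul]
  rw [h1, setIntegral_Xc X hXm hXs]

/- #### The operator built from a square-summing family -/

section Wop
variable {G : Type*} [NormedAddCommGroup G] [InnerProductSpace ℂ G]

def Wop (B : ℕ → H →L[ℂ] G)
    (hB : ∀ φ : H, HasSum (fun k => ‖B k φ‖ ^ (2:ℕ)) (‖φ‖ ^ (2:ℕ))) :
    H →L[ℂ] lp (fun _ : ℕ => G) 2 :=
  LinearMap.mkContinuous
    { toFun := fun φ => ⟨fun k => B k φ, lp_memℓp_of_sq (hB φ).summable⟩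
      map_add' := fun φ ψ => by
        apply lp.ext; funext k
        simp only [lp.coeFn_add, Pi.add_apply]
        exact (B k).map_add _ _
      map_smul' := fun c φ => by
        apply lp.ext; funext k
        simp only [lp.coeFn_smul, Pi.smul_apply, RingHom.id_apply]
        exact (B k).map_smul _ _ }
    1 (fun φ => by
      rw [one_mul]
      refine lp_norm_le_of_sq (norm_nonneg φ) ?_
      exact le_of_eq ((hB φ).tsum_eq))

@[simp] lemma Wop_apply (B : ℕ → H →L[ℂ] G)
    (hB : ∀ φ : H, HasSum (fun k => ‖B k φ‖ ^ (2:ℕ)) (‖φ‖ ^ (2:ℕ))) (φ : H) (k : ℕ) :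
    (Wop B hB φ) k = B k φ := rfl

end Wop

/- #### Diagonal operators -/

def scalarCLM (c : ℂ) : ℂ →L[ℂ] ℂ := c • ContinuousLinearMap.id ℂ ℂ

def Dop (a : ℕ → ℂ) (ha : ∀ n, ‖a n‖ ≤ 1) : H →L[ℂ] H :=
  lpComp (fun n => scalarCLM (a n)) (fun n x => by
    simp only [scalarCLM, ContinuousLinearMap.smul_apply, ContinuousLinearMap.id_apply,
      smul_eq_mul, norm_mul]
    exact mul_le_of_le_one_left (norm_nonneg x) (ha n))

lemma Dop_apply (a : ℕ → ℂ) (ha : ∀ n, ‖a n‖ ≤ 1) (f : H) (i : ℕ) :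
    (Dop a ha f) i = a i * f i := rfl

lemma Dop_e (a : ℕ → ℂ) (ha : ∀ n, ‖a n‖ ≤ 1) (n : ℕ) : Dop a ha (e n) = a n • e n := by
  apply lp.ext; funext i
  rw [lp.coeFn_smul, Pi.smul_apply]
  by_cases h : i = n
  · subst h; rfl
  · have h0 : (e n : ∀ _ : ℕ, ℂ) i = 0 := by simp [e, lp.single_apply, h]
    have : (Dop a ha (e n)) i = a i * (e n : ∀ _ : ℕ, ℂ) i := rfl
    rw [this, h0, mul_zero, smul_zero]

end Stmt5Aux

open Stmt5Aux

theorem stmt5 (c : ℕ × ℕ → ℂ) (hc : IsPhaseMatrix c) (F : ℕ → ℕ → ℂ)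
    (hF1 : ∀ n, HasSum (fun k => ‖F k n‖ ^ 2) 1)
    (hF2 : ∀ n m, HasSum (fun k => F k n * conj (F k m)) (c (n, m)))
    (X : Set ℝ) (hXm : MeasurableSet X) (hXs : X ⊆ Set.Ico 0 (2 * Real.pi)) :
    (∀ k, ∃! Ek : H →L[ℂ] H,
      ∀ n m : ℕ, @inner ℂ H _ (e n) (Ek (e m)) = F k n * conj (F k m) * ik ((n : ℤ) - m) X) ∧
    (∃! E : H →L[ℂ] H,
      ∀ n m : ℕ, @inner ℂ H _ (e n) (E (e m)) = c (n, m) * ik ((n : ℤ) - m) X) ∧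
    (∀ EF : ℕ → H →L[ℂ] H, ∀ EC : H →L[ℂ] H,
      (∀ k, ∀ n m : ℕ,
        @inner ℂ H _ (e n) (EF k (e m)) = F k n * conj (F k m) * ik ((n : ℤ) - m) X) →
      (∀ n m : ℕ, @inner ℂ H _ (e n) (EC (e m)) = c (n, m) * ik ((n : ℤ) - m) X) →
      (∀ k, (EF k).IsPositive) ∧
      ∀ φ ψ : H, HasSum (fun k => @inner ℂ H _ φ (EF k ψ)) (@inner ℂ H _ φ (EC ψ))) := by
  classical
  have hXcm : MeasurableSet (Xc X) := Xc_measurable hXm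
  have hFle : ∀ k n, ‖F k n‖ ≤ 1 := by
    intro k n
    have h := le_hasSum (hF1 n) k (fun j _ => by positivity)
    nlinarith [norm_nonneg (F k n)]
  set M : L2C →L[ℂ] L2C := mulInd hXcm with hMdef
  set D : ℕ → H →L[ℂ] H :=
    fun k => Dop (fun n => conj (F k n)) (fun n => by simpa using hFle k n) with hDdef
  set A : ℕ → H →L[ℂ] L2C := fun k => Viso.toContinuousLinearMap.comp (D k) with hAdef
  have hAe : ∀ k n, A k (e n) = conj (F k n) • v n := by
    intro k n
    rw [hAdef]
    simp only [ContinuousLinearMap.comp_apply]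
    rw [hDdef]
    rw [Dop_e, ContinuousLinearMap.map_smul]
    congr 1
    rw [LinearIsometry.coe_toContinuousLinearMap]
    exact Viso_e n
  set EFop : ℕ → H →L[ℂ] H :=
    fun k => (ContinuousLinearMap.adjoint (A k)).comp (M.comp (A k)) with hEFdef
  have hAdj : ∀ k (x : H) (y : H),
      @inner ℂ H _ x (EFop k y) = @inner ℂ L2C _ (A k x) (M (A k y)) := by
    intro k x y
    rw [hEFdef]
    simp only [ContinuousLinearMap.comp_apply]
    rw [ContinuousLinearMap.adjoint_inner_right]
  have hEFmat : ∀ k n m,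
      @inner ℂ H _ (e n) (EFop k (e m)) = F k n * conj (F k m) * ik ((n:ℤ) - m) X := by
    intro k n m
    rw [hAdj, hAe, hAe, M.map_smul, inner_smul_left, inner_smul_right]
    rw [hMdef, inner_v_M X hXm hXs, Complex.conj_conj]
    ring
  have hBsum : ∀ φ : H, HasSum (fun k => ‖A k φ‖ ^ (2:ℕ)) (‖φ‖ ^ (2:ℕ)) := by
    intro φ
    set g : ℕ → ℕ → ℝ := fun k n => ‖F k n‖ ^ (2:ℕ) * ‖φ n‖ ^ (2:ℕ) with hg
    have hAD : ∀ k, ‖A k φ‖ = ‖D k φ‖ := by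
      intro k
      rw [hAdef]
      exact Viso.norm_map (D k φ)
    have hDnorm : ∀ k, ‖D k φ‖ ^ (2:ℕ) = ∑' n, g k n := by
      intro k
      rw [lp_norm_sq]
      refine tsum_congr fun i => ?_
      rw [hDdef]
      have : (Dop (fun n => conj (F k n)) (fun n => by simpa using hFle k n) φ) i
          = conj (F k i) * φ i := rfl
      rw [this, norm_mul, RCLike.norm_conj, mul_pow, hg]
    have h1 : ∀ n, HasSum (fun k => g k n) (‖φ n‖ ^ (2:ℕ)) := by
      intro n
      simpa using (hF1 n).mul_right (‖φ n‖ ^ (2:ℕ))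
    have h2 : Summable (fun p : ℕ × ℕ => g p.2 p.1) := by
      refine (summable_prod_of_nonneg (fun p => by positivity)).2
        ⟨fun n => (h1 n).summable, ?_⟩
      have : (fun n => ∑' k, g k n) = fun n => ‖φ n‖ ^ (2:ℕ) :=
        funext fun n => (h1 n).tsum_eq
      rw [this]
      exact lp_summable_sq φ
    have h3 : Summable (fun p : ℕ × ℕ => g p.1 p.2) := h2.prod_symm
    have hfib : ∀ k, HasSum (fun n => g k n) (∑' n, g k n) := by
      intro k
      refine (Summable.of_nonneg_of_le (fun n => by positivity) (fun n => ?_)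
        (lp_summable_sq φ)).hasSum
      exact mul_le_of_le_one_left (by positivity) (pow_le_one₀ (norm_nonneg _) (hFle k n))
    have hsum : HasSum (fun k => ∑' n, g k n) (∑' p : ℕ × ℕ, g p.1 p.2) :=
      h3.hasSum.prod_fiberwise hfib
    have hval : (∑' p : ℕ × ℕ, g p.1 p.2) = ‖φ‖ ^ (2:ℕ) := by
      have e1 : ∑' (a : ℕ × ℕ), g a.1 a.2 = ∑' p : ℕ × ℕ, g p.2 p.1 :=
        (Equiv.prodComm ℕ ℕ).tsum_eq (fun p : ℕ × ℕ => g p.2 p.1)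
      have e2 : (∑' p : ℕ × ℕ, g p.2 p.1) = ∑' n, ∑' k, g k n := Summable.tsum_prod' h2 (fun n => (h1 n).summable)
      have e3 : (∑' n, ∑' k : ℕ, g k n) = ∑' n, ‖φ n‖ ^ (2:ℕ) :=
        tsum_congr fun n => (h1 n).tsum_eq
      rw [e1, e2, e3, ← lp_norm_sq]
    have hfn : (fun k => ‖A k φ‖ ^ (2:ℕ)) = fun k => ∑' n, g k n := by
      funext k; rw [hAD k, hDnorm k]
    rw [hfn]
    exact hval ▸ hsum
  set W : H →L[ℂ] lp (fun _ : ℕ => L2C) 2 := Wop A hBsum with hWdef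
  set Mt : lp (fun _ : ℕ => L2C) 2 →L[ℂ] lp (fun _ : ℕ => L2C) 2 :=
    lpComp (fun _ => M) (fun _ x => mulInd_norm_le hXcm x) with hMtdef
  set ECop : H →L[ℂ] H := (ContinuousLinearMap.adjoint W).comp (Mt.comp W) with hECdef
  have hECsum : ∀ φ ψ : H, HasSum (fun k => @inner ℂ H _ φ (EFop k ψ))
      (@inner ℂ H _ φ (ECop ψ)) := by
    intro φ ψ
    have h1 : @inner ℂ H _ φ (ECop ψ) = @inner ℂ _ _ (W φ) (Mt (W ψ)) := by
      rw [hECdef]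
      simp only [ContinuousLinearMap.comp_apply]
      rw [ContinuousLinearMap.adjoint_inner_right]
    have h2 := lp.hasSum_inner (𝕜 := ℂ) (W φ) (Mt (W ψ))
    have h3 : (fun k => @inner ℂ L2C _ ((W φ) k) ((Mt (W ψ)) k))
        = fun k => @inner ℂ H _ φ (EFop k ψ) := by
      funext k
      have hw1 : (W φ) k = A k φ := rfl
      have hw2 : (Mt (W ψ)) k = M (A k ψ) := rfl
      rw [hw1, hw2, hAdj]
    rw [h1]
    exact h3 ▸ h2
  have hECmat : ∀ n m, @inner ℂ H _ (e n) (ECop (e m)) = c (n, m) * ik ((n:ℤ) - m) X := by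
    intro n m
    have h1 := hECsum (e n) (e m)
    have h2 : HasSum (fun k => @inner ℂ H _ (e n) (EFop k (e m)))
        (c (n, m) * ik ((n:ℤ) - m) X) := by
      have h := (hF2 n m).mul_right (ik ((n:ℤ) - m) X)
      have heq : (fun k => F k n * conj (F k m) * ik ((n:ℤ) - m) X)
          = fun k => @inner ℂ H _ (e n) (EFop k (e m)) := by
        funext k; rw [hEFmat]
      exact heq ▸ h
    exact (h2.unique h1).symm
  refine ⟨fun k => ⟨EFop k, hEFmat k, fun T hT => op_unique _ hT (hEFmat k)⟩,
    ⟨ECop, hECmat, fun T hT => op_unique _ hT hECmat⟩, fun EF EC hEF hEC => ?_⟩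
  have hEFeq : ∀ k, EF k = EFop k := fun k => op_unique _ (hEF k) (hEFmat k)
  have hECeq : EC = ECop := op_unique _ hEC hECmat
  constructor
  · intro k
    rw [hEFeq k, hEFdef]
    exact (mulInd_isPositive hXcm).adjoint_conj (A k)
  · intro φ ψ
    rw [hECeq]
    have h4 : (fun k => @inner ℂ H _ φ (EF k ψ)) = fun k => @inner ℂ H _ φ (EFop k ψ) := by
      funext k; rw [hEFeq k]
    rw [h4]
    exact hECsum φ ψ
end
end

section
/- Let c be a phase matrix and T a state matrix. Then there exists a unique bounded operator Θ on ℓ²(ℕ,ℂ) with ⟨e_n, Θ e_m⟩ = c(m,n)·T(n,m) for all n, m ∈ ℕ; moreover Θ is a positive operator and the series Σ_{n=0}^∞ ⟨e_n, Θ e_n⟩ converges with sum 1. -/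
open scoped ComplexConjugate ComplexOrder

noncomputable section

def IsStateMatrix (T : ℕ × ℕ → ℂ) : Prop :=
  IsPosSemidef T ∧ HasSum (fun n => T (n, n)) 1

namespace Stmt6Aux

variable {A c T : ℕ × ℕ → ℂ}

lemma sum_psd (hA : IsPosSemidef A) (f : ℕ →₀ ℂ) (s : Finset ℕ) (hs : f.support ⊆ s) :
    0 ≤ ∑ n ∈ s, ∑ m ∈ s, conj (f n) * A (n, m) * f m := by
  have h := hA f
  have e1 : ∀ n : ℕ, ∑ m ∈ f.support, conj (f n) * A (n, m) * f m
      = ∑ m ∈ s, conj (f n) * A (n, m) * f m := fun n =>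
    Finset.sum_subset hs (fun m _ hm => by simp [Finsupp.notMem_support_iff.mp hm])
  have e2 : ∑ n ∈ f.support, ∑ m ∈ s, conj (f n) * A (n, m) * f m
      = ∑ n ∈ s, ∑ m ∈ s, conj (f n) * A (n, m) * f m :=
    Finset.sum_subset hs (fun n _ hn => by simp [Finsupp.notMem_support_iff.mp hn])
  calc (0:ℂ) ≤ _ := h
    _ = _ := by rw [Finset.sum_congr rfl (fun n _ => e1 n), e2]

lemma psd_diag (hA : IsPosSemidef A) (n : ℕ) : 0 ≤ A (n, n) := by
  have h := hA (Finsupp.single n 1)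
  rw [Finsupp.support_single_ne_zero n one_ne_zero] at h
  simpa using h

lemma psd_pair (hA : IsPosSemidef A) {n m : ℕ} (hnm : n ≠ m) (a b : ℂ) :
    0 ≤ conj a * A (n, n) * a + conj a * A (n, m) * b
      + conj b * A (m, n) * a + conj b * A (m, m) * b := by
  have hsupp : (Finsupp.single n a + Finsupp.single m b).support ⊆ ({n, m} : Finset ℕ) :=
    Finsupp.support_add.trans (Finset.union_subset
      (Finsupp.support_single_subset.trans (by simp))
      (Finsupp.support_single_subset.trans (by simp)))
  have h := sum_psd hA (Finsupp.single n a + Finsupp.single m b) {n, m} hsupp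
  rw [Finset.sum_pair hnm, Finset.sum_pair hnm, Finset.sum_pair hnm] at h
  simp only [Finsupp.add_apply, Finsupp.single_apply, if_pos rfl, if_neg hnm, if_neg hnm.symm,
    if_true, add_zero, zero_add] at h
  exact le_of_le_of_eq h (by ring)

lemma psd_herm (hA : IsPosSemidef A) (n m : ℕ) : A (m, n) = conj (A (n, m)) := by
  rcases eq_or_ne n m with rfl | hnm
  · have h := psd_diag hA n
    rw [Complex.le_def] at h
    exact (Complex.conj_eq_iff_im.2 h.2.symm).symm
  · have dnn := (Complex.le_def.1 (psd_diag hA n)).2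
    have dmm := (Complex.le_def.1 (psd_diag hA m)).2
    have h1 := (Complex.le_def.1 (psd_pair hA hnm 1 1)).2
    have h2 := (Complex.le_def.1 (psd_pair hA hnm 1 Complex.I)).2
    simp only [map_one, one_mul, mul_one, Complex.conj_I, Complex.zero_im, Complex.add_im,
      Complex.mul_im, Complex.I_re, Complex.I_im, Complex.neg_re, Complex.neg_im,
      Complex.mul_re, mul_zero, zero_mul, mul_one, one_mul, neg_zero, add_zero, zero_add,
      zero_sub, sub_zero, neg_neg] at h1 h2
    have dnn' : (A (n, n)).im = 0 := by simpa using dnn.symm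
    have dmm' : (A (m, m)).im = 0 := by simpa using dmm.symm
    apply Complex.ext
    · simp only [Complex.conj_re]
      linarith [h2, dnn', dmm']
    · simp only [Complex.conj_im]
      linarith [h1, dnn', dmm']

lemma diag_eq_re (hA : IsPosSemidef A) (n : ℕ) : A (n, n) = ((A (n, n)).re : ℂ) := by
  have h := (Complex.le_def.1 (psd_diag hA n)).2
  exact (Complex.ext (by simp) (by simpa using h)).symm

lemma diag_re_nonneg (hA : IsPosSemidef A) (n : ℕ) : 0 ≤ (A (n, n)).re := by
  simpa using (Complex.le_def.1 (psd_diag hA n)).1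

lemma psd_norm_sq_le (hA : IsPosSemidef A) (n m : ℕ) :
    ‖A (n, m)‖ ^ 2 ≤ (A (n, n)).re * (A (m, m)).re := by
  rcases eq_or_ne n m with rfl | hnm
  · rw [diag_eq_re hA n]
    simp [Complex.sq_norm, Complex.normSq_ofReal, sq]
  · set α := (A (n, n)).re with hα
    set β := (A (m, m)).re with hβ
    set P := A (n, m) with hP
    set nP := Complex.normSq P with hnP
    have hα0 := diag_re_nonneg hA n
    have hβ0 := diag_re_nonneg hA m
    have hquad : ∀ t : ℝ, 0 ≤ (β * nP) * (t * t) + (-(2 * nP)) * t + α := by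
      intro t
      have h := psd_pair hA hnm 1 (-(t:ℂ) * conj P)
      rw [psd_herm hA n m, diag_eq_re hA n, diag_eq_re hA m] at h
      have hexpr : conj (1:ℂ) * ((α:ℝ):ℂ) * 1 + conj (1:ℂ) * P * (-(t:ℂ) * conj P)
          + conj (-(t:ℂ) * conj P) * conj P * 1
          + conj (-(t:ℂ) * conj P) * ((β:ℝ):ℂ) * (-(t:ℂ) * conj P)
          = (((β * nP) * (t * t) + (-(2 * nP)) * t + α : ℝ) : ℂ) := by
        simp only [map_one, one_mul, mul_one, map_mul, map_neg, Complex.conj_conj,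
          Complex.conj_ofReal]
        push_cast
        linear_combination ((t:ℂ)^2 * (β:ℂ) - 2 * t) * Complex.mul_conj P
      rw [hexpr] at h
      exact Complex.zero_le_real.mp h
    have hd := discrim_le_zero hquad
    rw [discrim] at hd
    have hnP0 : 0 ≤ nP := Complex.normSq_nonneg P
    have hfin : nP ≤ α * β := by nlinarith [mul_nonneg hα0 hβ0]
    calc ‖P‖ ^ 2 = nP := by rw [hnP, Complex.sq_norm]
      _ ≤ α * β := hfin

lemma schur_sum_nonneg (hc : IsPosSemidef c) (hT : IsPosSemidef T)
    (f : ℕ → ℂ) (s : Finset ℕ) :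
    0 ≤ ∑ n ∈ s, ∑ m ∈ s, conj (f n) * (c (m, n) * T (n, m)) * f m := by
  classical
  set Cs : Matrix s s ℂ := fun i j => c (i, j) with hCs
  have hpsd : Cs.PosSemidef := by
    rw [Matrix.posSemidef_iff_dotProduct_mulVec]
    constructor
    · ext i j
      show star (Cs j i) = Cs i j
      simpa [Matrix.conjTranspose_apply, hCs] using (psd_herm hc (j : ℕ) (i : ℕ)).symm
    · intro x
      set fx : ℕ →₀ ℂ := Finsupp.onFinset s (fun n => if h : n ∈ s then x ⟨n, h⟩ else 0)
        (fun n h => by by_contra hn; simp [hn] at h) with hfx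
      have h0 := sum_psd hc fx s Finsupp.support_onFinset_subset
      have heq : ∑ n ∈ s, ∑ m ∈ s, conj (fx n) * c (n, m) * fx m
          = dotProduct (star x) (Matrix.mulVec Cs x) := by
        rw [← Finset.sum_attach s (fun n => ∑ m ∈ s, conj (fx n) * c (n, m) * fx m)]
        simp only [dotProduct, Matrix.mulVec, Pi.star_apply, Finset.univ_eq_attach]
        refine Finset.sum_congr rfl fun i _ => ?_
        rw [← Finset.sum_attach s (fun m => conj (fx ↑i) * c (↑i, m) * fx m), Finset.mul_sum]
        refine Finset.sum_congr rfl fun j _ => ?_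
        simp only [hfx, Finsupp.onFinset_apply, dif_pos i.2, dif_pos j.2, RCLike.star_def]
        ring
      rw [heq] at h0
      exact h0
  obtain ⟨B, hB⟩ : ∃ B : Matrix s s ℂ, Cs = Matrix.conjTranspose B * B := by
    open MatrixOrder in
    obtain ⟨X, hX, -, hXX⟩ := CFC.exists_sqrt_of_isSelfAdjoint_of_quasispectrumRestricts
      hpsd.isHermitian (QuasispectrumRestricts.nnreal_of_nonneg hpsd.nonneg)
    exact ⟨X, by rw [← hXX, ← Matrix.star_eq_conjTranspose, hX.star_eq]⟩
  have hc_entry : ∀ i j : s, c (↑i, ↑j) = ∑ k : s, conj (B k i) * B k j := by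
    intro i j
    have h := congrFun (congrFun hB i) j
    simpa [Matrix.mul_apply, Matrix.conjTranspose_apply, hCs, Finset.univ_eq_attach] using h
  set g : s → (ℕ →₀ ℂ) := fun k => Finsupp.onFinset s
      (fun n => if h : n ∈ s then conj (B k ⟨n, h⟩) * f n else 0)
      (fun n h => by by_contra hn; simp [hn] at h) with hg
  have key : ∀ n ∈ s, ∀ m ∈ s,
      conj (f n) * (c (m, n) * T (n, m)) * f m
        = ∑ k : s, conj ((g k) n) * T (n, m) * (g k) m := by
    intro n hn m hm
    rw [psd_herm hc n m, hc_entry ⟨n, hn⟩ ⟨m, hm⟩, map_sum]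
    simp only [Finset.sum_mul, Finset.mul_sum]
    refine Finset.sum_congr rfl fun k _ => ?_
    simp only [hg, Finsupp.onFinset_apply, dif_pos hn, dif_pos hm, map_mul, Complex.conj_conj]
    ring
  calc (0:ℂ) ≤ ∑ k : s, ∑ n ∈ s, ∑ m ∈ s, conj ((g k) n) * T (n, m) * (g k) m :=
        Finset.sum_nonneg fun k _ => sum_psd hT (g k) s Finsupp.support_onFinset_subset
    _ = ∑ n ∈ s, ∑ k : s, ∑ m ∈ s, conj ((g k) n) * T (n, m) * (g k) m := Finset.sum_comm
    _ = ∑ n ∈ s, ∑ m ∈ s, ∑ k : s, conj ((g k) n) * T (n, m) * (g k) m :=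
        Finset.sum_congr rfl fun n _ => Finset.sum_comm
    _ = ∑ n ∈ s, ∑ m ∈ s, conj (f n) * (c (m, n) * T (n, m)) * f m :=
        Finset.sum_congr rfl fun n hn => Finset.sum_congr rfl fun m hm => (key n hn m hm).symm

lemma two_toReal : (2 : ENNReal).toReal = 2 := by simp

lemma memℓp_two {G : Type*} [NormedAddCommGroup G] {f : ℕ → G}
    (h : Summable fun n => ‖f n‖ ^ 2) : Memℓp f 2 := by
  apply memℓp_gen
  rw [two_toReal]
  refine h.congr fun n => ?_
  rw [← Real.rpow_natCast ‖f n‖ 2]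
  norm_num

lemma lp_norm_sq {G : Type*} [NormedAddCommGroup G] (f : lp (fun _ : ℕ => G) 2) :
    ‖f‖ ^ 2 = ∑' n, ‖f n‖ ^ 2 := by
  have h := lp.norm_rpow_eq_tsum (p := 2) (by rw [two_toReal]; norm_num) f
  rw [two_toReal] at h
  calc ‖f‖ ^ 2 = ‖f‖ ^ (2:ℝ) := by rw [← Real.rpow_natCast ‖f‖ 2]; norm_num
    _ = ∑' n, ‖f n‖ ^ (2:ℝ) := h
    _ = ∑' n, ‖f n‖ ^ 2 := by
        refine tsum_congr fun n => ?_
        rw [← Real.rpow_natCast ‖f n‖ 2]; norm_num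

lemma inner_e_left (n : ℕ) (y : H) : @inner ℂ H _ (e n) y = y n := by
  rw [e, lp.inner_single_left]
  simp [RCLike.inner_apply]

lemma single_eq_smul_e (m : ℕ) (a : ℂ) : lp.single 2 m a = a • e m := by
  rw [e, ← lp.single_smul, smul_eq_mul, mul_one]

lemma exists_theta (M : ℕ → ℕ → ℂ) (r : ℕ → ℝ) (hr0 : ∀ n, 0 ≤ r n)
    (hr2 : HasSum (fun n => r n ^ 2) 1)
    (hMnorm : ∀ n m, ‖M n m‖ ≤ r n * r m) :
    ∃ Θ : H →L[ℂ] H, ∀ n m : ℕ, @inner ℂ H _ (e n) (Θ (e m)) = M n m := by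
  classical
  have hrmem : Memℓp r 2 := memℓp_two (by
    refine hr2.summable.congr fun n => ?_
    rw [Real.norm_eq_abs, abs_of_nonneg (hr0 n)])
  set rlp : lp (fun _ : ℕ => ℝ) 2 := ⟨r, hrmem⟩ with hrlp
  have hrlpnorm : ‖rlp‖ = 1 := by
    have h := lp_norm_sq rlp
    have h2 : ‖rlp‖ ^ 2 = 1 := by
      rw [h, ← hr2.tsum_eq]
      exact tsum_congr fun n => by
        rw [Real.norm_eq_abs, abs_of_nonneg (hr0 n)]
    nlinarith [norm_nonneg rlp]
  have hsq : ∀ f : H, Summable fun n => ‖f n‖ ^ 2 := by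
    intro f
    have := (memℓp_gen_iff (p := 2) (by rw [two_toReal]; norm_num)).mp (lp.memℓp f)
    rw [two_toReal] at this
    refine this.congr fun n => ?_
    rw [← Real.rpow_natCast ‖(f : ℕ → ℂ) n‖ 2]; norm_num
  have hnfmem : ∀ f : H, Memℓp (fun n => ‖f n‖) 2 := fun f =>
    memℓp_two (by simpa using hsq f)
  set nf : H → lp (fun _ : ℕ => ℝ) 2 := fun f => ⟨fun n => ‖f n‖, hnfmem f⟩ with hnf
  have hnfnorm : ∀ f : H, ‖nf f‖ = ‖f‖ := by
    intro f
    have h1 := lp_norm_sq (nf f)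
    have h2 := lp_norm_sq f
    have h3 : ‖nf f‖ ^ 2 = ‖f‖ ^ 2 := by
      rw [h1, h2]
      exact tsum_congr fun n => by simp [hnf]
    nlinarith [norm_nonneg (nf f), norm_nonneg f]
  have hsummul : ∀ f : H, Summable fun m => r m * ‖f m‖ := by
    intro f
    have := lp.summable_inner (𝕜 := ℝ) rlp (nf f)
    refine this.congr fun m => ?_
    simp [RCLike.inner_apply, hrlp, hnf, mul_comm]
  have htsum_le : ∀ f : H, ∑' m, r m * ‖f m‖ ≤ ‖f‖ := by
    intro f
    have h1 : ∑' m, r m * ‖f m‖ = @inner ℝ _ _ rlp (nf f) := by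
      rw [lp.inner_eq_tsum]
      exact tsum_congr fun m => by simp [RCLike.inner_apply, hrlp, hnf, mul_comm]
    rw [h1]
    calc @inner ℝ _ _ rlp (nf f) ≤ ‖rlp‖ * ‖nf f‖ := real_inner_le_norm _ _
      _ = ‖f‖ := by rw [hrlpnorm, hnfnorm, one_mul]
  have hrow : ∀ (f : H) (n : ℕ), Summable fun m => M n m * f m := by
    intro f n
    refine Summable.of_norm_bounded (g := fun m => r n * (r m * ‖f m‖))
      ((hsummul f).mul_left _) fun m => ?_
    rw [norm_mul]
    calc ‖M n m‖ * ‖f m‖ ≤ (r n * r m) * ‖f m‖ :=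
          mul_le_mul_of_nonneg_right (hMnorm n m) (norm_nonneg _)
      _ = r n * (r m * ‖f m‖) := by ring
  have hrowbound : ∀ (f : H) (n : ℕ), ‖∑' m, M n m * f m‖ ≤ r n * ‖f‖ := by
    intro f n
    calc ‖∑' m, M n m * f m‖ ≤ ∑' m, ‖M n m * f m‖ :=
          norm_tsum_le_tsum_norm ((hrow f n).norm)
      _ ≤ ∑' m, r n * (r m * ‖f m‖) := ?_
      _ = r n * ∑' m, r m * ‖f m‖ := tsum_mul_left
      _ ≤ r n * ‖f‖ := mul_le_mul_of_nonneg_left (htsum_le f) (hr0 n)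
    · exact Summable.tsum_le_tsum (fun m => by
        rw [norm_mul]
        calc ‖M n m‖ * ‖f m‖ ≤ (r n * r m) * ‖f m‖ :=
              mul_le_mul_of_nonneg_right (hMnorm n m) (norm_nonneg _)
          _ = r n * (r m * ‖f m‖) := by ring)
        ((hrow f n).norm) (((hsummul f).mul_left _))
  set gd : H → ℕ → ℂ := fun f n => ∑' m, M n m * f m with hgd
  have hgsq : ∀ f : H, Summable fun n => ‖gd f n‖ ^ 2 := by
    intro f
    have hb : Summable (fun n => r n ^ 2 * ‖f‖ ^ 2) := hr2.summable.mul_right _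
    refine Summable.of_nonneg_of_le (fun n => sq_nonneg _) (fun n => ?_) hb
    calc ‖gd f n‖ ^ 2 ≤ (r n * ‖f‖) ^ 2 := by
          have h := hrowbound f n
          have h0 : 0 ≤ ‖gd f n‖ := norm_nonneg _
          nlinarith
      _ = r n ^ 2 * ‖f‖ ^ 2 := by ring
  have hgdmem : ∀ f : H, Memℓp (gd f) 2 := fun f => memℓp_two (hgsq f)
  set L : H →ₗ[ℂ] H :=
    { toFun := fun f => ⟨gd f, hgdmem f⟩
      map_add' := by
        intro f g
        apply lp.ext
        funext n
        simp only [hgd]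
        calc ∑' m, M n m * (f + g) m
            = ∑' m, (M n m * f m + M n m * g m) := by
              refine tsum_congr fun m => ?_
              rw [lp.coeFn_add, Pi.add_apply, mul_add]
          _ = (∑' m, M n m * f m) + ∑' m, M n m * g m := Summable.tsum_add (hrow f n) (hrow g n)
          _ = _ := by rw [lp.coeFn_add, Pi.add_apply]
      map_smul' := by
        intro a f
        apply lp.ext
        funext n
        simp only [hgd, RingHom.id_apply]
        calc ∑' m, M n m * (a • f) m
            = ∑' m, a * (M n m * f m) := by
              refine tsum_congr fun m => ?_
              rw [lp.coeFn_smul, Pi.smul_apply, smul_eq_mul]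
              ring
          _ = a * ∑' m, M n m * f m := tsum_mul_left
          _ = _ := by rw [lp.coeFn_smul, Pi.smul_apply, smul_eq_mul] } with hL
  have hLbound : ∀ f : H, ‖L f‖ ≤ 1 * ‖f‖ := by
    intro f
    rw [one_mul]
    have h1 : ‖L f‖ ^ 2 ≤ ‖f‖ ^ 2 := by
      rw [lp_norm_sq]
      have hb : Summable (fun n => r n ^ 2 * ‖f‖ ^ 2) := hr2.summable.mul_right _
      have hcoe : ((L f : H) : ℕ → ℂ) = gd f := rfl
      rw [hcoe]
      calc ∑' n, ‖gd f n‖ ^ 2 ≤ ∑' n, r n ^ 2 * ‖f‖ ^ 2 := by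
            refine Summable.tsum_le_tsum (fun n => ?_) (hgsq f) hb
            calc ‖gd f n‖ ^ 2 ≤ (r n * ‖f‖) ^ 2 := by
                  have h := hrowbound f n
                  have h0 : 0 ≤ ‖gd f n‖ := norm_nonneg _
                  nlinarith
              _ = r n ^ 2 * ‖f‖ ^ 2 := by ring
          _ = (∑' n, r n ^ 2) * ‖f‖ ^ 2 := tsum_mul_right
          _ = ‖f‖ ^ 2 := by rw [hr2.tsum_eq, one_mul]
    nlinarith [norm_nonneg (L f), norm_nonneg f]
  refine ⟨LinearMap.mkContinuous L 1 hLbound, fun n m => ?_⟩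
  have hval : (LinearMap.mkContinuous L 1 hLbound) (e m) = L (e m) := rfl
  rw [hval, inner_e_left]
  show (∑' k, M n k * (e m : ℕ → ℂ) k) = M n m
  have hz : ∀ k : ℕ, k ≠ m → M n k * (e m : ℕ → ℂ) k = 0 := by
    intro k hk
    rw [e, lp.single_apply_ne 2 m _ hk, mul_zero]
  rw [tsum_eq_single m hz, e, lp.single_apply_self, mul_one]

lemma theta_unique (Θ Θ' : H →L[ℂ] H)
    (h : ∀ n m : ℕ, @inner ℂ H _ (e n) (Θ (e m)) = @inner ℂ H _ (e n) (Θ' (e m))) :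
    Θ = Θ' := by
  have hsingle : ∀ m, Θ (e m) = Θ' (e m) := by
    intro m
    apply lp.ext
    funext n
    rw [← inner_e_left n (Θ (e m)), ← inner_e_left n (Θ' (e m)), h]
  refine ContinuousLinearMap.ext fun x => ?_
  have hx : HasSum (fun i : ℕ => lp.single 2 i (x i)) x :=
    lp.hasSum_single (by norm_num) x
  have h1 : HasSum (fun i : ℕ => Θ (lp.single 2 i (x i))) (Θ x) := Θ.hasSum hx
  have h2 : HasSum (fun i : ℕ => Θ (lp.single 2 i (x i))) (Θ' x) := by
    refine HasSum.congr_fun (Θ'.hasSum hx) fun i => ?_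
    rw [single_eq_smul_e, map_smul, map_smul, hsingle]
  exact h1.unique h2

end Stmt6Aux

open Stmt6Aux in
theorem stmt6 (c : ℕ × ℕ → ℂ) (hc : IsPhaseMatrix c)
    (T : ℕ × ℕ → ℂ) (hT : IsStateMatrix T) :
    (∃! Θ : H →L[ℂ] H,
      ∀ n m : ℕ, @inner ℂ H _ (e n) (Θ (e m)) = c (m, n) * T (n, m)) ∧
    (∀ Θ : H →L[ℂ] H,
      (∀ n m : ℕ, @inner ℂ H _ (e n) (Θ (e m)) = c (m, n) * T (n, m)) →
      Θ.IsPositive ∧ HasSum (fun n => @inner ℂ H _ (e n) (Θ (e n))) 1) := by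
  obtain ⟨hcd, hcp⟩ := hc
  obtain ⟨hTp, hTs⟩ := hT
  -- diagonal data
  set d : ℕ → ℝ := fun n => (T (n, n)).re with hd
  have hd0 : ∀ n, 0 ≤ d n := fun n => diag_re_nonneg hTp n
  set r : ℕ → ℝ := fun n => Real.sqrt (d n) with hr
  have hr0 : ∀ n, 0 ≤ r n := fun n => Real.sqrt_nonneg _
  have hdsum : HasSum d 1 := by
    have h := Complex.reCLM.hasSum hTs
    simpa using h
  have hr2 : HasSum (fun n => r n ^ 2) 1 := by
    have hfe : (fun n => r n ^ 2) = d := funext fun n => Real.sq_sqrt (hd0 n)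
    rw [hfe]; exact hdsum
  have hMnorm : ∀ n m, ‖c (m, n) * T (n, m)‖ ≤ r n * r m := by
    intro n m
    have h1 : ‖c (m, n)‖ ^ 2 ≤ (c (m, m)).re * (c (n, n)).re := psd_norm_sq_le hcp m n
    rw [hcd m, hcd n] at h1
    simp only [Complex.one_re, one_mul] at h1
    have hc1 : ‖c (m, n)‖ ≤ 1 := by nlinarith [norm_nonneg (c (m, n))]
    have h2 : ‖T (n, m)‖ ^ 2 ≤ d n * d m := psd_norm_sq_le hTp n m
    have hT1 : ‖T (n, m)‖ ≤ r n * r m := by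
      have h3 := Real.sqrt_le_sqrt h2
      rw [Real.sqrt_sq (norm_nonneg _), Real.sqrt_mul (hd0 n)] at h3
      exact h3
    calc ‖c (m, n) * T (n, m)‖ = ‖c (m, n)‖ * ‖T (n, m)‖ := norm_mul _ _
      _ ≤ 1 * (r n * r m) := mul_le_mul hc1 hT1 (norm_nonneg _) zero_le_one
      _ = r n * r m := one_mul _
  obtain ⟨Θ₀, hΘ₀⟩ := exists_theta (fun n m => c (m, n) * T (n, m)) r hr0 hr2 hMnorm
  have hpart2 : ∀ Θ : H →L[ℂ] H,
      (∀ n m : ℕ, @inner ℂ H _ (e n) (Θ (e m)) = c (m, n) * T (n, m)) →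
      Θ.IsPositive ∧ HasSum (fun n => @inner ℂ H _ (e n) (Θ (e n))) 1 := by
    intro Θ hΘ
    have hxx : ∀ x : H, 0 ≤ @inner ℂ H _ x (Θ x) := by
      intro x
      have hx : HasSum (fun i : ℕ => lp.single 2 i (x i)) x :=
        lp.hasSum_single (by norm_num) x
      set xs : Finset ℕ → H := fun s => ∑ i ∈ s, lp.single 2 i (x i) with hxs
      have hfin : ∀ s : Finset ℕ, 0 ≤ @inner ℂ H _ (xs s) (Θ (xs s)) := by
        intro s
        have hexp : @inner ℂ H _ (xs s) (Θ (xs s))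
            = ∑ n ∈ s, ∑ m ∈ s, conj (x n) * (c (m, n) * T (n, m)) * x m := by
          rw [hxs]
          simp only [map_sum]
          rw [sum_inner]
          refine Finset.sum_congr rfl fun n hn => ?_
          rw [inner_sum]
          refine Finset.sum_congr rfl fun m hm => ?_
          rw [single_eq_smul_e, single_eq_smul_e, map_smul, inner_smul_left, inner_smul_right,
            hΘ]
          ring
        rw [hexp]
        exact schur_sum_nonneg hcp hTp (fun n => x n) s
      have hcont : Filter.Tendsto (fun s => @inner ℂ H _ (xs s) (Θ (xs s))) Filter.atTop
          (nhds (@inner ℂ H _ x (Θ x))) := by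
        have hcts : Continuous fun y : H => @inner ℂ H _ y (Θ y) :=
          Continuous.inner continuous_id Θ.continuous
        exact (hcts.tendsto x).comp hx
      have him : (@inner ℂ H _ x (Θ x)).im = 0 := by
        have h1 : Filter.Tendsto (fun s => (@inner ℂ H _ (xs s) (Θ (xs s))).im) Filter.atTop
            (nhds ((@inner ℂ H _ x (Θ x)).im)) := (Complex.continuous_im.tendsto _).comp hcont
        have h2 : (fun s => (@inner ℂ H _ (xs s) (Θ (xs s))).im) = fun _ => (0:ℝ) :=
          funext fun s => ((Complex.le_def.1 (hfin s)).2).symm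
        rw [h2] at h1
        exact tendsto_nhds_unique h1 tendsto_const_nhds
      have hre : 0 ≤ (@inner ℂ H _ x (Θ x)).re := by
        have h1 : Filter.Tendsto (fun s => (@inner ℂ H _ (xs s) (Θ (xs s))).re) Filter.atTop
            (nhds ((@inner ℂ H _ x (Θ x)).re)) := (Complex.continuous_re.tendsto _).comp hcont
        refine ge_of_tendsto' h1 fun s => ?_
        simpa using (Complex.le_def.1 (hfin s)).1
      rw [Complex.le_def]
      refine ⟨by simpa using hre, ?_⟩
      simp only [Complex.zero_im]
      exact him.symm
    constructor
    · rw [ContinuousLinearMap.isPositive_iff_complex]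
      intro x
      have h0 := hxx x
      have him := (Complex.le_def.1 h0).2
      have hre := (Complex.le_def.1 h0).1
      simp only [Complex.zero_im, Complex.zero_re] at him hre
      have hsymm : @inner ℂ H _ (Θ x) x = @inner ℂ H _ x (Θ x) := by
        rw [← inner_conj_symm]
        exact Complex.conj_eq_iff_im.2 him.symm
      constructor
      · rw [hsymm]
        apply Complex.ext
        · simp
        · simp only [Complex.ofReal_im]
          · exact him
      · rw [hsymm]
        simpa using hre
    · have hfe : (fun n => @inner ℂ H _ (e n) (Θ (e n))) = fun n => T (n, n) :=
        funext fun n => by rw [hΘ, hcd, one_mul]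
      rw [hfe]
      exact hTs
  refine ⟨⟨Θ₀, hΘ₀, fun Θ hΘ => theta_unique Θ Θ₀ fun n m => by rw [hΘ, hΘ₀]⟩, hpart2⟩
end
end

section
/- Let c be a phase matrix and let F_k : ℕ → ℂ, k ∈ ℕ, satisfy Σ_{k=0}^∞ |F_k(n)|² = 1 for all n and c(n,m) = Σ_{k=0}^∞ F_k(n)·conj(F_k(m)) for all n, m. For each k let A_k be the bounded diagonal operator on ℓ²(ℕ,ℂ) with A_k e_n = conj(F_k(n))·e_n (bounded since |F_k(n)| ≤ 1). Then: (a) for every ψ ∈ ℓ²(ℕ,ℂ), Σ_{k=0}^∞ ⟨ψ, A_k A_k* ψ⟩ = ‖ψ‖²; (b) for all φ, ψ, φ′, ψ′ ∈ ℓ²(ℕ,ℂ), the series Σ_{k=0}^∞ ⟨φ′, A_k φ⟩·⟨ψ, A_k* ψ′⟩ converges with sum ⟨φ′, Θ ψ′⟩, where Θ is the unique bounded operator with ⟨e_n, Θ e_m⟩ = c(m,n)·⟨e_n,φ⟩·⟨ψ,e_m⟩ for all n, m. -/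
open scoped ComplexConjugate ComplexOrder

noncomputable section

lemma inner_e_left (n : ℕ) (f : H) : @inner ℂ H _ (e n) f = f n := by
  rw [e, lp.inner_single_left]; simp [inner]

lemma inner_e_right (n : ℕ) (f : H) : @inner ℂ H _ f (e n) = conj (f n) := by
  rw [e, lp.inner_single_right]; simp [inner]

lemma inner_e_e (n m : ℕ) : @inner ℂ H _ (e n) (e m) = if m = n then 1 else 0 := by
  rw [inner_e_left, e, lp.single_apply]
  split_ifs <;> simp_all

lemma hasSum_singles (f : H) : HasSum (fun n => (f n : ℂ) • e n) f := by
  have h := lp.hasSum_single (E := fun _ : ℕ => ℂ) (p := 2) (by norm_num) f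
  have : (fun n => (f n : ℂ) • e n) = fun n => lp.single 2 n (f n) := by
    funext n
    rw [e, ← lp.single_smul, smul_eq_mul, mul_one]
  rw [this]; exact h

lemma norm_sq_hasSum (f : H) : HasSum (fun n => ‖f n‖ ^ 2) (‖f‖ ^ 2) := by
  have h := lp.hasSum_inner (𝕜 := ℂ) f f
  rw [inner_self_eq_norm_sq_to_K] at h
  rw [← Complex.hasSum_ofReal (f := fun n => ‖f n‖^2) (x := ‖f‖^2)]
  push_cast
  have : (fun n => ((‖f n‖ : ℂ))^2) = fun n => @inner ℂ ℂ _ (f n) (f n) := by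
    funext n
    rw [RCLike.inner_apply, RCLike.mul_conj]
    norm_cast
  rw [this]; exact h

section
variable (F : ℕ → ℕ → ℂ) (A : ℕ → H →L[ℂ] H)
  (hA : ∀ k n, A k (e n) = conj (F k n) • e n)

include hA in
lemma coord_A (k : ℕ) (ψ : H) (n : ℕ) : (A k ψ) n = conj (F k n) * ψ n := by
  have h3 := ((hasSum_singles ψ).mapL (A k)).mapL (innerSL ℂ (e n))
  have heq : (fun m => innerSL ℂ (e n) (A k (ψ m • e m)))
      = fun m => if m = n then conj (F k n) * ψ n else 0 := by
    funext m
    simp only [innerSL_apply_apply, map_smul, hA, inner_smul_right, inner_e_e,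
      smul_eq_mul]
    split_ifs with h
    · subst h; ring
    · ring
  rw [heq] at h3
  have h4 := (hasSum_ite_eq n (conj (F k n) * ψ n)).unique h3
  rw [← inner_e_left n (A k ψ)]
  exact h4.symm

include hA in
lemma coord_adj (k : ℕ) (ψ : H) (n : ℕ) :
    (ContinuousLinearMap.adjoint (A k) ψ) n = F k n * ψ n := by
  rw [← inner_e_left, ContinuousLinearMap.adjoint_inner_right, hA, inner_smul_left,
    inner_e_left]
  simp

include hA in
lemma partA (hF1 : ∀ n, HasSum (fun k => ‖F k n‖ ^ 2) 1) (ψ : H) :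
    HasSum (fun k => @inner ℂ H _ ψ (A k (ContinuousLinearMap.adjoint (A k) ψ)))
      ((‖ψ‖ : ℂ) ^ 2) := by
  set u : ℕ → H := fun k => ContinuousLinearMap.adjoint (A k) ψ with hu
  have hterm : ∀ k, @inner ℂ H _ ψ (A k (u k)) = ((‖u k‖ ^ 2 : ℝ) : ℂ) := by
    intro k
    rw [← ContinuousLinearMap.adjoint_inner_left, inner_self_eq_norm_sq_to_K]
    norm_cast
  have hk : ∀ k, HasSum (fun n => ‖F k n‖ ^ 2 * ‖ψ n‖ ^ 2) (‖u k‖ ^ 2) := by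
    intro k
    have h := norm_sq_hasSum (u k)
    have he : (fun n => ‖F k n‖ ^ 2 * ‖ψ n‖ ^ 2) = fun n => ‖(u k) n‖ ^ 2 := by
      funext n
      rw [hu]
      simp only []
      rw [coord_adj F A hA k ψ n, norm_mul]
      ring
    rw [he]; exact h
  have hn : ∀ n, HasSum (fun k => ‖F k n‖ ^ 2 * ‖ψ n‖ ^ 2) (‖ψ n‖ ^ 2) := by
    intro n
    simpa using (hF1 n).mul_right (‖ψ n‖ ^ 2)
  have hsummable : Summable (fun p : ℕ × ℕ => ‖F p.2 p.1‖ ^ 2 * ‖ψ p.1‖ ^ 2) := by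
    rw [summable_prod_of_nonneg (by intro p; positivity)]
    refine ⟨fun n => (hn n).summable, ?_⟩
    have : (fun n => ∑' k, ‖F k n‖ ^ 2 * ‖ψ n‖ ^ 2) = fun n => ‖ψ n‖ ^ 2 := by
      funext n; exact (hn n).tsum_eq
    rw [this]
    exact (norm_sq_hasSum ψ).summable
  have hr := hsummable.hasSum
  have hS : ∑' p : ℕ × ℕ, ‖F p.2 p.1‖ ^ 2 * ‖ψ p.1‖ ^ 2 = ‖ψ‖ ^ 2 :=
    (hr.prod_fiberwise fun n => hn n).unique (norm_sq_hasSum ψ)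
  rw [hS] at hr
  have hk' : HasSum (fun k => ‖u k‖ ^ 2) (‖ψ‖ ^ 2) :=
    HasSum.prod_fiberwise ((Equiv.prodComm ℕ ℕ).hasSum_iff.mpr hr) fun k => hk k
  have : HasSum (fun k => ((‖u k‖ ^ 2 : ℝ) : ℂ)) ((‖ψ‖ : ℂ) ^ 2) := by
    have := Complex.hasSum_ofReal.mpr hk'
    push_cast at this ⊢
    exact this
  rw [show (fun k => @inner ℂ H _ ψ (A k (u k))) = fun k => ((‖u k‖ ^ 2 : ℝ) : ℂ) from
    funext hterm]
  exact this

/-- product of coordinatewise norms is summable (AM-GM) -/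
lemma summable_coord_mul (f g : H) : Summable (fun n => ‖f n‖ * ‖g n‖) := by
  refine Summable.of_nonneg_of_le (fun n => by positivity)
    (fun n => ?_) (((norm_sq_hasSum f).summable.add (norm_sq_hasSum g).summable).div_const 2)
  have := sq_nonneg (‖f n‖ - ‖g n‖)
  nlinarith

def Pf (f g : H) (n : ℕ) : ℂ := conj (f n) * g n

def Gf (F : ℕ → ℕ → ℂ) (φ ψ φ' ψ' : H) (x : ℕ × ℕ × ℕ) : ℂ :=
  (Pf φ' φ x.2.1 * conj (F x.1 x.2.1)) * (Pf ψ ψ' x.2.2 * F x.1 x.2.2)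

def σ1 : ℕ × ℕ × ℕ ≃ (ℕ × ℕ) × ℕ where
  toFun x := ((x.2.1, x.1), x.2.2)
  invFun y := (y.1.2, (y.1.1, y.2))
  left_inv := by rintro ⟨k, n, m⟩; rfl
  right_inv := by rintro ⟨⟨n, k⟩, m⟩; rfl

def σ2 : ℕ × ℕ × ℕ ≃ (ℕ × ℕ) × ℕ where
  toFun x := ((x.2.2, x.1), x.2.1)
  invFun y := (y.1.2, (y.2, y.1.1))
  left_inv := by rintro ⟨k, n, m⟩; rfl
  right_inv := by rintro ⟨⟨m, k⟩, n⟩; rfl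

def σ3 : (ℕ × ℕ) × ℕ ≃ ℕ × ℕ × ℕ where
  toFun y := (y.2, y.1)
  invFun x := (x.2, x.1)
  left_inv := by rintro ⟨⟨n, m⟩, k⟩; rfl
  right_inv := by rintro ⟨k, n, m⟩; rfl

lemma summable_weight (hF1 : ∀ n, HasSum (fun k => ‖F k n‖ ^ 2) 1)
    (a : ℕ → ℝ) (ha : Summable a) (hapos : ∀ n, 0 ≤ a n) :
    Summable (fun p : ℕ × ℕ => a p.1 * ‖F p.2 p.1‖ ^ 2) := by
  rw [summable_prod_of_nonneg (fun p => by have := hapos p.1; positivity)]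
  constructor
  · exact fun n => ((hF1 n).summable).mul_left (a n)
  · have : (fun n => ∑' k, a n * ‖F k n‖ ^ 2) = fun n => a n := by
      funext n
      rw [((hF1 n).mul_left (a n)).tsum_eq, mul_one]
    rw [this]; exact ha

set_option maxHeartbeats 2000000 in
include hA in
lemma partB (hF1 : ∀ n, HasSum (fun k => ‖F k n‖ ^ 2) 1) (c : ℕ × ℕ → ℂ)
    (hF2 : ∀ n m, HasSum (fun k => F k n * conj (F k m)) (c (n, m)))
    (φ ψ φ' ψ' : H) (Θ : H →L[ℂ] H)
    (hΘ : ∀ n m : ℕ, @inner ℂ H _ (e n) (Θ (e m)) =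
      c (m, n) * @inner ℂ H _ (e n) φ * @inner ℂ H _ ψ (e m)) :
    HasSum (fun k => @inner ℂ H _ φ' (A k φ) *
        @inner ℂ H _ ψ (ContinuousLinearMap.adjoint (A k) ψ'))
      (@inner ℂ H _ φ' (Θ ψ')) := by
  -- summability of G
  have hPsum : Summable (fun n => ‖Pf φ' φ n‖) := by
    have := summable_coord_mul φ' φ
    refine this.congr fun n => ?_
    simp [Pf, norm_mul]
  have hQsum : Summable (fun m => ‖Pf ψ ψ' m‖) := by
    have := summable_coord_mul ψ ψ'
    refine this.congr fun m => ?_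
    simp [Pf, norm_mul]
  have hC1 := summable_weight F hF1 (fun n => ‖Pf φ' φ n‖) hPsum (fun n => norm_nonneg _)
  have hC2 := summable_weight F hF1 (fun m => ‖Pf ψ ψ' m‖) hQsum (fun m => norm_nonneg _)
  have hD1 : Summable (fun y : (ℕ × ℕ) × ℕ => (‖Pf φ' φ y.1.1‖ * ‖F y.1.2 y.1.1‖ ^ 2) * ‖Pf ψ ψ' y.2‖) :=
    hC1.mul_of_nonneg hQsum (fun p => by positivity) (fun m => norm_nonneg _)
  have hD2 : Summable (fun y : (ℕ × ℕ) × ℕ => (‖Pf ψ ψ' y.1.1‖ * ‖F y.1.2 y.1.1‖ ^ 2) * ‖Pf φ' φ y.2‖) :=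
    hC2.mul_of_nonneg hPsum (fun p => by positivity) (fun m => norm_nonneg _)
  have hB : Summable (fun x : ℕ × ℕ × ℕ =>
      ((‖Pf φ' φ x.2.1‖ * ‖F x.1 x.2.1‖ ^ 2) * ‖Pf ψ ψ' x.2.2‖
        + (‖Pf ψ ψ' x.2.2‖ * ‖F x.1 x.2.2‖ ^ 2) * ‖Pf φ' φ x.2.1‖) / 2) :=
    ((σ1.summable_iff.mpr hD1).add (σ2.summable_iff.mpr hD2)).div_const 2
  have hGsum : Summable (Gf F φ ψ φ' ψ') := by
    refine Summable.of_norm (Summable.of_nonneg_of_le (fun x => norm_nonneg _)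
      (fun x => ?_) hB)
    obtain ⟨k, n, m⟩ := x
    have hGx : ‖Gf F φ ψ φ' ψ' (k, n, m)‖
        = ‖Pf φ' φ n‖ * ‖F k n‖ * (‖Pf ψ ψ' m‖ * ‖F k m‖) := by
      rw [Gf]
      simp only [norm_mul, RCLike.norm_conj]
    rw [hGx]
    have h1 : (0:ℝ) ≤ ‖Pf φ' φ n‖ := norm_nonneg _
    have h2 : (0:ℝ) ≤ ‖Pf ψ ψ' m‖ := norm_nonneg _
    have h3 : (0:ℝ) ≤ ‖F k n‖ := norm_nonneg _
    have h4 : (0:ℝ) ≤ ‖F k m‖ := norm_nonneg _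
    have key := sq_nonneg (‖F k n‖ - ‖F k m‖)
    nlinarith [mul_nonneg (mul_nonneg h1 h2) key]
  -- per-k fiber sums
  have h1 : ∀ k, HasSum (fun n => Pf φ' φ n * conj (F k n)) (@inner ℂ H _ φ' (A k φ)) := by
    intro k
    have h := lp.hasSum_inner (𝕜 := ℂ) φ' (A k φ)
    have he : (fun n => @inner ℂ ℂ _ (φ' n) ((A k φ) n)) = fun n => Pf φ' φ n * conj (F k n) := by
      funext n
      rw [RCLike.inner_apply, coord_A F A hA k φ n, Pf]
      ring
    rwa [he] at h
  have h2 : ∀ k, HasSum (fun m => Pf ψ ψ' m * F k m)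
      (@inner ℂ H _ ψ (ContinuousLinearMap.adjoint (A k) ψ')) := by
    intro k
    have h := lp.hasSum_inner (𝕜 := ℂ) ψ (ContinuousLinearMap.adjoint (A k) ψ')
    have he : (fun m => @inner ℂ ℂ _ (ψ m) ((ContinuousLinearMap.adjoint (A k) ψ') m))
        = fun m => Pf ψ ψ' m * F k m := by
      funext m
      rw [RCLike.inner_apply, coord_adj F A hA k ψ' m, Pf]
      ring
    rwa [he] at h
  have hterm : ∀ k, HasSum (fun x : ℕ × ℕ => Gf F φ ψ φ' ψ' (k, x))
      (@inner ℂ H _ φ' (A k φ) * @inner ℂ H _ ψ (ContinuousLinearMap.adjoint (A k) ψ')) :=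
    fun k =>
      HasSum.mul (f := fun n => Pf φ' φ n * conj (F k n))
        (g := fun m => Pf ψ ψ' m * F k m) (h1 k) (h2 k) (hGsum.prod_factor k)
  have hmain : HasSum (fun k => @inner ℂ H _ φ' (A k φ) *
      @inner ℂ H _ ψ (ContinuousLinearMap.adjoint (A k) ψ')) (∑' x, Gf F φ ψ φ' ψ' x) :=
    hGsum.hasSum.prod_fiberwise hterm
  -- identify the sum
  have hWsum : HasSum (fun p : ℕ × ℕ => Pf φ' φ p.1 * Pf ψ ψ' p.2 * c (p.2, p.1)) (∑' x, Gf F φ ψ φ' ψ' x) := by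
    refine HasSum.prod_fiberwise (σ3.hasSum_iff.mpr hGsum.hasSum) ?_
    rintro ⟨n, m⟩
    have h := (hF2 m n).mul_left (Pf φ' φ n * Pf ψ ψ' m)
    have he : (fun k => Pf φ' φ n * Pf ψ ψ' m * (F k m * conj (F k n)))
        = fun k => Gf F φ ψ φ' ψ' (k, (n, m)) := by
      funext k; rw [Gf]; ring
    rwa [he] at h
  have hcol : ∀ m, HasSum (fun n => Pf φ' φ n * Pf ψ ψ' m * c (m, n))
      (ψ' m * @inner ℂ H _ φ' (Θ (e m))) := by
    intro m
    have h := (lp.hasSum_inner (𝕜 := ℂ) φ' (Θ (e m))).mul_left (ψ' m)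
    have he : (fun n => ψ' m * @inner ℂ ℂ _ (φ' n) ((Θ (e m)) n))
        = fun n => Pf φ' φ n * Pf ψ ψ' m * c (m, n) := by
      funext n
      rw [RCLike.inner_apply, ← inner_e_left n (Θ (e m)), hΘ n m, inner_e_left, inner_e_right,
        Pf, Pf]
      ring
    rwa [he] at h
  have hrow : HasSum (fun m => ψ' m * @inner ℂ H _ φ' (Θ (e m)))
      (@inner ℂ H _ φ' (Θ ψ')) := by
    have h := (hasSum_singles ψ').mapL ((innerSL ℂ φ').comp Θ)
    have he : (fun m => ((innerSL ℂ φ').comp Θ) (ψ' m • e m))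
        = fun m => ψ' m * @inner ℂ H _ φ' (Θ (e m)) := by
      funext m
      simp [inner_smul_right]
    rwa [he] at h
  have hfinal : HasSum (fun m => ψ' m * @inner ℂ H _ φ' (Θ (e m))) (∑' x, Gf F φ ψ φ' ψ' x) :=
    HasSum.prod_fiberwise ((Equiv.prodComm ℕ ℕ).hasSum_iff.mpr hWsum) hcol
  rwa [← hrow.unique hfinal] at hmain

end

theorem stmt7 (c : ℕ × ℕ → ℂ) (hc : IsPhaseMatrix c) (F : ℕ → ℕ → ℂ)
    (hF1 : ∀ n, HasSum (fun k => ‖F k n‖ ^ 2) 1)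
    (hF2 : ∀ n m, HasSum (fun k => F k n * conj (F k m)) (c (n, m)))
    (A : ℕ → H →L[ℂ] H) (hA : ∀ k n, A k (e n) = conj (F k n) • e n) :
    -- (a)
    (∀ ψ : H, HasSum
      (fun k => @inner ℂ H _ ψ (A k (ContinuousLinearMap.adjoint (A k) ψ)))
      ((‖ψ‖ : ℂ) ^ 2)) ∧
    -- (b)
    (∀ φ ψ φ' ψ' : H, ∀ Θ : H →L[ℂ] H,
      (∀ n m : ℕ, @inner ℂ H _ (e n) (Θ (e m)) =
        c (m, n) * @inner ℂ H _ (e n) φ * @inner ℂ H _ ψ (e m)) →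
      HasSum
        (fun k => @inner ℂ H _ φ' (A k φ) *
          @inner ℂ H _ ψ (ContinuousLinearMap.adjoint (A k) ψ'))
        (@inner ℂ H _ φ' (Θ ψ'))) := by
  constructor
  · exact partA F A hA hF1
  · intro φ ψ φ' ψ' Θ hΘ
    exact partB F A hA hF1 c hF2 φ ψ φ' ψ' Θ hΘ
end
end

section
/- Let c be a phase matrix. The following are equivalent: (i) for all state matrices T and T′, if c(m,n)·T(n,m) = c(m,n)·T′(n,m) for all n, m ∈ ℕ, then T = T′; (ii) c(n,m) ≠ 0 for all n, m ∈ ℕ. -/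
open scoped ComplexConjugate ComplexOrder

noncomputable section

lemma rankOne_psd (v : ℕ → ℂ) (r : ℝ) (hr : 0 ≤ r) :
    IsPosSemidef (fun p => (r : ℂ) * (v p.1 * conj (v p.2))) := by
  intro f
  set z := ∑ n ∈ f.support, conj (f n) * v n with hz
  have key : ∑ n ∈ f.support, ∑ m ∈ f.support,
      conj (f n) * ((r:ℂ) * (v n * conj (v m))) * f m = (r:ℂ) * (z * conj z) := by
    rw [hz, map_sum, Finset.sum_mul_sum, Finset.mul_sum]
    refine Finset.sum_congr rfl fun n _ => ?_
    rw [Finset.mul_sum]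
    refine Finset.sum_congr rfl fun m _ => ?_
    simp only [map_mul, Complex.conj_conj]
    ring
  rw [key, Complex.mul_conj, ← Complex.ofReal_mul]
  exact Complex.zero_le_real.mpr (mul_nonneg hr (Complex.normSq_nonneg z))

lemma pair_sum (c : ℕ × ℕ → ℂ) (hpsd : IsPosSemidef c) (n m : ℕ) (h : n ≠ m)
    (a b : ℂ) (ha : a ≠ 0) (hb : b ≠ 0) :
    0 ≤ conj a * c (n, n) * a + conj a * c (n, m) * b
      + conj b * c (m, n) * a + conj b * c (m, m) * b := by
  have hd : Disjoint (Finsupp.single n a).support (Finsupp.single m b).support := by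
    rw [Finsupp.support_single_ne_zero _ ha, Finsupp.support_single_ne_zero _ hb]
    simp [h.symm, h]
  have key := hpsd (Finsupp.single n a + Finsupp.single m b)
  have hsupp : (Finsupp.single n a + Finsupp.single m b).support = {n, m} := by
    rw [Finsupp.support_add_eq hd, Finsupp.support_single_ne_zero _ ha,
      Finsupp.support_single_ne_zero _ hb]
    rfl
  have hfn : (Finsupp.single n a + Finsupp.single m b) n = a := by
    simp [Finsupp.single_apply, h.symm]
  have hfm : (Finsupp.single n a + Finsupp.single m b) m = b := by
    simp [Finsupp.single_apply, h]
  rw [hsupp] at key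
  rw [Finset.sum_pair h] at key
  rw [Finset.sum_pair h, Finset.sum_pair h] at key
  rw [hfn, hfm] at key
  convert key using 1
  ring

lemma herm (c : ℕ × ℕ → ℂ) (hdiag : ∀ n, c (n, n) = 1) (hpsd : IsPosSemidef c)
    (n m : ℕ) : c (m, n) = conj (c (n, m)) := by
  rcases eq_or_ne n m with rfl | h
  · rw [hdiag]; simp
  · have h1 := pair_sum c hpsd n m h 1 1 one_ne_zero one_ne_zero
    have h2 := pair_sum c hpsd n m h 1 Complex.I one_ne_zero Complex.I_ne_zero
    rw [hdiag, hdiag] at h1 h2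
    have i1 := (Complex.le_def.mp h1).2
    have i2 := (Complex.le_def.mp h2).2
    simp only [map_one, one_mul, mul_one, Complex.add_im, Complex.one_im,
      Complex.conj_I, Complex.mul_im, Complex.I_re, Complex.I_im, Complex.neg_im,
      Complex.neg_re, Complex.mul_re, Complex.zero_im, Complex.one_re] at i1 i2
    apply Complex.ext <;> simp only [Complex.conj_re, Complex.conj_im] <;> linarith

theorem stmt8 (c : ℕ × ℕ → ℂ) (hc : IsPhaseMatrix c) :
    (∀ T T' : ℕ × ℕ → ℂ, IsStateMatrix T → IsStateMatrix T' →
      (∀ n m : ℕ, c (m, n) * T (n, m) = c (m, n) * T' (n, m)) → T = T') ↔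
    (∀ n m : ℕ, c (n, m) ≠ 0) := by
  constructor
  · intro h n m h0
    have hnm : n ≠ m := by
      rintro rfl
      rw [hc.1] at h0
      exact one_ne_zero h0
    have h0' : c (m, n) = 0 := by rw [herm c hc.1 hc.2 n m, h0, map_zero]
    set u : ℕ → ℂ := fun k => if k = n ∨ k = m then 1 else 0 with hu
    set u' : ℕ → ℂ := fun k => if k = n then 1 else if k = m then -1 else 0 with hu'
    set T : ℕ × ℕ → ℂ := fun p => ((1/2 : ℝ) : ℂ) * (u p.1 * conj (u p.2)) with hT
    set T' : ℕ × ℕ → ℂ := fun p => ((1/2 : ℝ) : ℂ) * (u' p.1 * conj (u' p.2)) with hT'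
    have hdiagT : ∀ k, k ∉ ({n, m} : Finset ℕ) → T (k, k) = 0 := by
      intro k hk
      simp only [Finset.mem_insert, Finset.mem_singleton, not_or] at hk
      simp [hT, hu, hk.1, hk.2]
    have hdiagT' : ∀ k, k ∉ ({n, m} : Finset ℕ) → T' (k, k) = 0 := by
      intro k hk
      simp only [Finset.mem_insert, Finset.mem_singleton, not_or] at hk
      simp [hT', hu', hk.1, hk.2]
    have hsT : IsStateMatrix T := by
      refine ⟨rankOne_psd u (1/2) (by norm_num), ?_⟩
      have : HasSum (fun k => T (k, k)) (∑ k ∈ ({n, m} : Finset ℕ), T (k, k)) :=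
        hasSum_sum_of_ne_finset_zero hdiagT
      rwa [Finset.sum_pair hnm, show T (n, n) + T (m, m) = 1 by
        simp [hT, hu, hnm]; norm_num] at this
    have hsT' : IsStateMatrix T' := by
      refine ⟨rankOne_psd u' (1/2) (by norm_num), ?_⟩
      have : HasSum (fun k => T' (k, k)) (∑ k ∈ ({n, m} : Finset ℕ), T' (k, k)) :=
        hasSum_sum_of_ne_finset_zero hdiagT'
      rwa [Finset.sum_pair hnm, show T' (n, n) + T' (m, m) = 1 by
        simp [hT', hu', hnm, hnm.symm]; norm_num] at this
    have hcond : ∀ a b : ℕ, c (b, a) * T (a, b) = c (b, a) * T' (a, b) := by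
      intro a b
      by_cases hab : (a = n ∧ b = m) ∨ (a = m ∧ b = n)
      · rcases hab with ⟨rfl, rfl⟩ | ⟨rfl, rfl⟩
        · rw [h0']; ring
        · rw [h0]; ring
      · have hTT : T (a, b) = T' (a, b) := by
          push_neg at hab
          simp only [hT, hT', hu, hu']
          by_cases ha : a = n <;> by_cases ha' : a = m <;>
            by_cases hb : b = n <;> by_cases hb' : b = m <;>
            first
              | exact absurd (ha.symm.trans ha') hnm
              | exact absurd (hb.symm.trans hb') hnm
              | exact absurd hb' (hab.1 ha)
              | exact absurd hb (hab.2 ha')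
              | simp [ha, ha', hb, hb', hnm, hnm.symm]
        rw [hTT]
    have heq := h T T' hsT hsT' hcond
    have := congrFun heq (n, m)
    have hmn : m ≠ n := hnm.symm
    simp [hT, hT', hu, hu', hnm, hmn] at this
    norm_num at this
  · intro h T T' hT hT' heq
    funext p
    obtain ⟨a, b⟩ := p
    exact mul_left_cancel₀ (h b a) (heq a b)
end
end

section
/- Let c be a phase matrix. The following are equivalent: (i) for every state matrix S there exists a state matrix T such that c(m,n)·T(n,m) = S(n,m) for all n, m ∈ ℕ; (ii) |c(n,m)| = 1 for all n, m ∈ ℕ. -/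
open scoped ComplexConjugate ComplexOrder

noncomputable section

lemma psd_finset {c : ℕ × ℕ → ℂ} (hc : IsPosSemidef c) (s : Finset ℕ) (f : ℕ → ℂ) :
    0 ≤ ∑ n ∈ s, ∑ m ∈ s, conj (f n) * c (n, m) * f m := by
  classical
  set g : ℕ →₀ ℂ := Finsupp.indicator s (fun n _ => f n) with hg
  have hsupp : g.support ⊆ s := Finsupp.support_indicator_subset _ _
  have hval : ∀ n ∈ s, g n = f n := fun n hn => Finsupp.indicator_of_mem hn _
  have step1 : ∑ n ∈ s, ∑ m ∈ s, conj (f n) * c (n, m) * f m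
      = ∑ n ∈ s, ∑ m ∈ s, conj (g n) * c (n, m) * g m := by
    refine Finset.sum_congr rfl fun n hn => Finset.sum_congr rfl fun m hm => ?_
    rw [hval n hn, hval m hm]
  have step2 : ∑ n ∈ g.support, ∑ m ∈ g.support, conj (g n) * c (n, m) * g m
      = ∑ n ∈ s, ∑ m ∈ s, conj (g n) * c (n, m) * g m := by
    rw [Finset.sum_subset hsupp]
    · refine Finset.sum_congr rfl fun n hn => Finset.sum_subset hsupp fun m _ hm => ?_
      rw [Finsupp.notMem_support_iff.mp hm, mul_zero]
    · intro n _ hn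
      refine Finset.sum_eq_zero fun m _ => ?_
      rw [Finsupp.notMem_support_iff.mp hn, map_zero, zero_mul, zero_mul]
  rw [step1, ← step2]; exact hc g


lemma psd_diag {c : ℕ × ℕ → ℂ} (hc : IsPosSemidef c) (n : ℕ) : 0 ≤ c (n, n) := by
  have := psd_finset hc {n} (fun _ => 1)
  simpa using this


lemma psd_herm {c : ℕ × ℕ → ℂ} (hc : IsPosSemidef c) (n m : ℕ) :
    c (m, n) = conj (c (n, m)) := by
  rcases eq_or_ne n m with rfl | hnm
  · have h := psd_diag hc n
    rw [Complex.le_def] at h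
    rw [Complex.conj_eq_iff_im.mpr h.2.symm]
  · have hdn := psd_diag hc n
    have hdm := psd_diag hc m
    rw [Complex.le_def] at hdn hdm
    have h1 := psd_finset hc {n, m} (fun _ => 1)
    have h2 := psd_finset hc {n, m} (fun k => if k = n then 1 else Complex.I)
    rw [Finset.sum_pair hnm] at h1 h2
    rw [Finset.sum_pair hnm, Finset.sum_pair hnm] at h1 h2
    simp only [hnm, hnm.symm, if_pos rfl, if_neg, ite_true, ite_false, reduceIte] at h2
    rw [Complex.le_def] at h1 h2
    obtain ⟨-, h1⟩ := h1
    obtain ⟨-, h2⟩ := h2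
    simp only [Complex.add_im, Complex.mul_im, Complex.mul_re, Complex.conj_re, Complex.conj_im,
      Complex.one_re, Complex.one_im, Complex.I_re, Complex.I_im, Complex.zero_im,
      map_one, mul_one, one_mul, mul_zero, zero_mul, neg_zero, neg_neg, add_zero, zero_add] at h1 h2
    have him_n : (c (n, n)).im = 0 := by simpa using hdn.2.symm
    have him_m : (c (m, m)).im = 0 := by simpa using hdm.2.symm
    apply Complex.ext <;>
    · simp only [Complex.conj_re, Complex.conj_im]
      linarith


lemma unit_mul_conj {z : ℂ} (h : ‖z‖ = 1) : z * conj z = 1 := by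
  rw [Complex.mul_conj, Complex.normSq_eq_norm_sq, h]
  norm_num

-- Cauchy-Schwarz style bound


lemma psd_bound {c : ℕ × ℕ → ℂ} (hc : IsPosSemidef c) {n m : ℕ} (hnm : n ≠ m)
    {d : ℝ} (hd : 0 < d) (hdn : c (n, n) = (d : ℂ)) (hdm : c (m, m) = (d : ℂ)) :
    Complex.normSq (c (n, m)) ≤ d * d := by
  have herm := psd_herm hc n m
  have h := psd_finset hc {n, m} (fun k => if k = n then (d : ℂ) else -conj (c (n, m)))
  rw [Finset.sum_pair hnm, Finset.sum_pair hnm, Finset.sum_pair hnm] at h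
  simp only [if_pos rfl, if_neg hnm.symm, ite_true, ite_false, reduceIte] at h
  rw [hdn, hdm, herm] at h
  have key : conj ((d:ℂ)) * (d:ℂ) * (d:ℂ) + conj ((d:ℂ)) * c (n, m) * -conj (c (n, m)) +
      (conj (-conj (c (n, m))) * conj (c (n, m)) * (d:ℂ) +
        conj (-conj (c (n, m))) * (d:ℂ) * -conj (c (n, m)))
      = ((d * d * d - d * Complex.normSq (c (n, m)) : ℝ) : ℂ) := by
    simp only [Complex.conj_ofReal, map_neg, Complex.conj_conj]
    push_cast
    rw [← Complex.mul_conj]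
    ring
  rw [key] at h
  rw [Complex.le_def] at h
  simp only [Complex.zero_re, Complex.ofReal_re] at h
  nlinarith [h.1, hd]


lemma factor {c : ℕ × ℕ → ℂ} (hc : IsPhaseMatrix c)
    (habs : ∀ n m : ℕ, ‖c (n, m)‖ = 1) (n m : ℕ) :
    c (0, n) * c (n, m) = c (0, m) := by
  rcases eq_or_ne n 0 with rfl | hn0
  · rw [hc.1 0, one_mul]
  rcases eq_or_ne m 0 with rfl | hm0
  · rw [psd_herm hc.2 0 n, hc.1 0]; linear_combination unit_mul_conj (habs 0 n)
  rcases eq_or_ne n m with rfl | hnm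
  · rw [hc.1 n, mul_one]
  -- 0, n, m pairwise distinct
  set a := c (0, n) with ha
  set b := c (0, m) with hb
  set d := c (n, m) with hd
  set β : ℂ := b - a * d with hβ
  set t : ℂ := -conj β with ht
  set f : ℕ → ℂ := fun k => if k = 0 then 1 else if k = n then -conj a else t with hf
  have h0s : (0 : ℕ) ∉ ({n, m} : Finset ℕ) := by simp [Ne.symm hn0, Ne.symm hm0]
  have h := psd_finset hc.2 (insert 0 {n, m}) f
  simp only [Finset.sum_insert h0s, Finset.sum_pair hnm] at h
  have f0 : f 0 = 1 := by simp [hf]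
  have fn : f n = -conj a := by simp [hf, hn0]
  have fm : f m = t := by simp [hf, hm0, Ne.symm hnm]
  rw [f0, fn, fm] at h
  rw [hc.1 0, hc.1 n, hc.1 m, psd_herm hc.2 0 n, psd_herm hc.2 0 m, psd_herm hc.2 n m] at h
  have haa : a * conj a = 1 := unit_mul_conj (habs 0 n)
  have key : conj (1:ℂ) * 1 * 1 + (conj (1:ℂ) * a * -conj a + conj (1:ℂ) * b * t) +
      (conj (-conj a) * conj a * 1 + (conj (-conj a) * 1 * -conj a + conj (-conj a) * d * t) +
        (conj t * conj b * 1 + (conj t * conj d * -conj a + conj t * 1 * t)))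
      = -(β * conj β) := by
    simp only [ht, hβ, map_neg, map_one, map_sub, map_mul, Complex.conj_conj]
    linear_combination -haa
  rw [key, Complex.mul_conj] at h
  rw [Complex.le_def] at h
  simp only [Complex.zero_re, Complex.neg_re, Complex.ofReal_re] at h
  have : Complex.normSq β = 0 := le_antisymm (by linarith [h.1]) (Complex.normSq_nonneg β)
  have hβ0 : β = 0 := Complex.normSq_eq_zero.mp this
  have : b = a * d := by rwa [hβ, sub_eq_zero] at hβ0
  rw [this]


theorem stmt9 (c : ℕ × ℕ → ℂ) (hc : IsPhaseMatrix c) :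
    (∀ S : ℕ × ℕ → ℂ, IsStateMatrix S →
      ∃ T : ℕ × ℕ → ℂ, IsStateMatrix T ∧
        ∀ n m : ℕ, c (m, n) * T (n, m) = S (n, m)) ↔
    (∀ n m : ℕ, ‖c (n, m)‖ = 1) := by
  constructor
  · intro hyp n m
    rcases eq_or_ne n m with rfl | hnm
    · rw [hc.1 n]; simp
    -- build the state matrix S supported on {n,m}
    set v : ℕ → ℂ := fun k => if k = n ∨ k = m then 1 else 0 with hv
    set S : ℕ × ℕ → ℂ := fun p => (1 / 2 : ℂ) * v p.1 * v p.2 with hS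
    have hvconj : ∀ k, conj (v k) = v k := by
      intro k; by_cases h : k = n ∨ k = m <;> simp [hv, h]
    have hSpsd : IsPosSemidef S := by
      intro f
      have : ∀ a b : ℕ, conj (f a) * S (a, b) * f b
          = (1 / 2 : ℂ) * (conj (v a * f a) * (v b * f b)) := by
        intro a b
        rw [map_mul, hvconj]
        simp only [hS]
        ring
      simp only [this]
      have hsum : ∑ a ∈ f.support, ∑ b ∈ f.support,
          (1 / 2 : ℂ) * (conj (v a * f a) * (v b * f b))
          = (1 / 2 : ℂ) * ((∑ a ∈ f.support, conj (v a * f a)) *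
              (∑ b ∈ f.support, v b * f b)) := by
        rw [Finset.sum_mul_sum, Finset.mul_sum]
        exact Finset.sum_congr rfl fun a _ => by rw [Finset.mul_sum]
      rw [hsum, ← map_sum]
      have := star_mul_self_nonneg (∑ b ∈ f.support, v b * f b)
      have h2 : (0 : ℂ) ≤ (1 / 2 : ℂ) := by
        rw [Complex.le_def]; norm_num
      exact mul_nonneg h2 this
    have hSsum : HasSum (fun k => S (k, k)) 1 := by
      have hz : ∀ k ∉ ({n, m} : Finset ℕ), S (k, k) = 0 := by
        intro k hk
        simp only [Finset.mem_insert, Finset.mem_singleton] at hk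
        push_neg at hk
        simp [hS, hv, hk.1, hk.2]
      have := hasSum_sum_of_ne_finset_zero (L := SummationFilter.unconditional ℕ) hz
      rwa [Finset.sum_pair hnm, show S (n, n) + S (m, m) = 1 by norm_num [hS, hv]] at this
    obtain ⟨T, ⟨hTpsd, hTsum⟩, hTc⟩ := hyp S ⟨hSpsd, hSsum⟩
    have hTnn : T (n, n) = ((1 / 2 : ℝ) : ℂ) := by
      have := hTc n n
      rw [hc.1 n, one_mul] at this
      rw [this]; norm_num [hS, hv]
    have hTmm : T (m, m) = ((1 / 2 : ℝ) : ℂ) := by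
      have := hTc m m
      rw [hc.1 m, one_mul] at this
      rw [this]; norm_num [hS, hv]
    have hb := psd_bound hTpsd (Ne.symm hnm) (by norm_num : (0:ℝ) < 1/2) hTmm hTnn
    -- c (n, m) * T (m, n) = S (m, n) = 1/2
    have hprod : c (n, m) * T (m, n) = (1 / 2 : ℂ) := by
      rw [hTc m n]; simp [hS, hv]
    have habsT : ‖T (m, n)‖ ≤ 1 / 2 := by
      have := Complex.sq_norm (T (m, n))
      nlinarith [norm_nonneg (T (m, n))]
    have hcle : ‖c (n, m)‖ ≤ 1 := by
      have hb2 := psd_bound hc.2 hnm (by norm_num : (0:ℝ) < 1)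
        (by rw [hc.1 n]; norm_num) (by rw [hc.1 m]; norm_num)
      have := Complex.sq_norm (c (n, m))
      nlinarith [norm_nonneg (c (n, m))]
    have habsprod : ‖c (n, m)‖ * ‖T (m, n)‖ = 1 / 2 := by
      rw [← norm_mul, hprod]
      norm_num
    nlinarith [norm_nonneg (c (n, m)), norm_nonneg (T (m, n))]
  · intro habs S hSstate
    set u : ℕ → ℂ := fun k => c (0, k) with hu
    have huu : ∀ k, u k * conj (u k) = 1 := fun k => unit_mul_conj (habs 0 k)
    have hcu : ∀ n m : ℕ, c (m, n) * (u m * conj (u n)) = 1 := by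
      intro n m
      have h1 := factor hc habs m n  -- c(0,m) * c(m,n) = c(0,n)
      calc c (m, n) * (u m * conj (u n)) = (u m * c (m, n)) * conj (u n) := by ring
        _ = u n * conj (u n) := by rw [show u m * c (m, n) = u n from h1]
        _ = 1 := huu n
    refine ⟨fun p => u p.2 * conj (u p.1) * S p, ⟨?_, ?_⟩, ?_⟩
    · intro f
      set g : ℕ →₀ ℂ := ⟨f.support, fun k => u k * f k, by
        intro k
        rw [Finsupp.mem_support_iff, mul_ne_zero_iff]
        constructor
        · intro h
          refine ⟨?_, h⟩
          intro hzero
          have h0 := habs 0 k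
          rw [show u k = c (0, k) from rfl] at hzero
          rw [hzero] at h0
          simp at h0
        · exact fun h => h.2⟩ with hg
      have hgsupp : g.support = f.support := rfl
      have := hSstate.1 g
      rw [hgsupp] at this
      convert this using 1
      refine Finset.sum_congr rfl fun a _ => Finset.sum_congr rfl fun b _ => ?_
      show conj (f a) * (u b * conj (u a) * S (a, b)) * f b
          = conj (u a * f a) * S (a, b) * (u b * f b)
      rw [map_mul]; ring
    · have : (fun k => u k * conj (u k) * S (k, k)) = fun k => S (k, k) := by
        funext k; rw [huu k, one_mul]
      rw [show (fun k => u k * conj (u k) * S ((k, k) : ℕ × ℕ)) = fun k => S (k, k) from this]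
      exact hSstate.2
    · intro n m
      calc c (m, n) * (u m * conj (u n) * S (n, m))
          = (c (m, n) * (u m * conj (u n))) * S (n, m) := by ring
        _ = S (n, m) := by rw [hcu n m, one_mul]
end
end
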